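/- arXiv:2207.10769 — 6 statements merged into one kernel-verified Lean document; each statement's English description precedes it below -/
import Mathlib

section
/- Let B > 0. Suppose T ∈ C²([0,B]) and ψ : [0,B]×[-1,1] → ℝ (with x ↦ ψ(x,μ) C¹ for each μ ≠ 0 and ψ bounded and measurable) satisfy T''(x) + ∫_{-1}^{1}(ψ(x,μ) − T(x)⁴)dμ = 0 and μ∂_xψ(x,μ) + ψ(x,μ) − T(x)⁴ = 0 on [0,B] for μ ≠ 0, together with T'(B) = 0 and ψ(B,μ) = ψ(B,−μ) for all μ ∈ (0,1]. Then T'(x) = ∫_{-1}^{1} μ ψ(x,μ) dμ for every x ∈ [0,B]. -/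
/-!
Integrating the transport equation over `[x, B]` expresses `μ ψ(x, μ)` through
`μ ψ(B, μ)` and `∫ₓᴮ (ψ - T⁴)`. Integrating once more in `μ`, the reflective condition kills the
boundary flux `∫ μ ψ(B, μ) dμ`, and after exchanging the order of integration the temperature
equation turns the remaining double integral into `∫ₓᴮ T'' = T'(B) - T'(x) = -T'(x)`.
-/

open MeasureTheory Set Function

theorem integral_eq_sub_of_hasDerivWithinAt_Icc {f f' : ℝ → ℝ} {a b : ℝ} (hab : a ≤ b)
    (hd : ∀ y ∈ Icc a b, HasDerivWithinAt f (f' y) (Icc a b) y)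
    (hc : ContinuousOn f' (Icc a b)) :
    ∫ y in a..b, f' y = f b - f a := by
  refine intervalIntegral.integral_eq_sub_of_hasDeriv_right_of_le hab
    (fun y hy => (hd y hy).continuousWithinAt) (fun y hy => ?_) (hc.intervalIntegrable_of_Icc hab)
  exact ((hd y (Ioo_subset_Icc_self hy)).hasDerivAt (Icc_mem_nhds hy.1 hy.2)).hasDerivWithinAt

theorem integrableOn_of_abs_le {α : Type*} [MeasurableSpace α] {μ : Measure α} {s : Set α}
    {f : α → ℝ} {C : ℝ} (hs : MeasurableSet s) (hμs : μ s ≠ ⊤) (hf : Measurable f)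
    (hC : ∀ z ∈ s, |f z| ≤ C) : IntegrableOn f s μ :=
  Measure.integrableOn_of_bounded hμs hf.aestronglyMeasurable (ae_restrict_of_forall_mem hs hC)

theorem intervalIntegrable_of_abs_le {f : ℝ → ℝ} {a b C : ℝ} (hf : Measurable f) (hab : a ≤ b)
    (hC : ∀ y ∈ Icc a b, |f y| ≤ C) : IntervalIntegrable f volume a b :=
  (intervalIntegrable_iff_integrableOn_Ioc_of_le hab).2 <|
    integrableOn_of_abs_le measurableSet_Ioc measure_Ioc_lt_top.ne hf
      fun y hy => hC y (Ioc_subset_Icc_self hy)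

theorem intervalIntegral_swap_of_abs_le {F : ℝ → ℝ → ℝ} {a b c d C : ℝ}
    (hF : Measurable (uncurry F)) (hab : a ≤ b) (hcd : c ≤ d)
    (hC : ∀ x ∈ Icc a b, ∀ y ∈ Icc c d, |F x y| ≤ C) :
    ∫ x in a..b, ∫ y in c..d, F x y = ∫ y in c..d, ∫ x in a..b, F x y := by
  refine intervalIntegral_intervalIntegral_swap ?_
  rw [uIoc_of_le hab, uIoc_of_le hcd]
  refine integrableOn_of_abs_le (measurableSet_Ioc.prod measurableSet_Ioc) ?_ hF
    fun z hz => hC _ (Ioc_subset_Icc_self hz.1) _ (Ioc_subset_Icc_self hz.2)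
  rw [Measure.volume_eq_prod, Measure.prod_prod]
  exact ENNReal.mul_ne_top measure_Ioc_lt_top.ne measure_Ioc_lt_top.ne

theorem integral_mul_eq_zero_of_even {g : ℝ → ℝ} {a : ℝ} (ha : 0 ≤ a)
    (hg : ∀ μ ∈ Ioc 0 a, g μ = g (-μ)) :
    ∫ μ in -a..a, μ * g μ = 0 := by
  have hodd : ∫ μ in -a..a, -μ * g (-μ) = -∫ μ in -a..a, μ * g μ := by
    rw [← intervalIntegral.integral_neg]
    refine intervalIntegral.integral_congr fun μ hμ => ?_
    rw [uIcc_of_le (by linarith)] at hμ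
    rcases lt_trichotomy μ 0 with hneg | rfl | hpos
    · simp [hg (-μ) ⟨by linarith, by linarith [hμ.1]⟩]
    · simp
    · simp [hg μ ⟨hpos, hμ.2⟩]
  have hflip := intervalIntegral.integral_comp_neg (a := -a) (b := a) fun μ => μ * g μ
  rw [neg_neg, hodd] at hflip
  linarith

theorem mul_sub_eq_integral_of_transport {f f' S : ℝ → ℝ} {a b x μ : ℝ} (hx : x ∈ Icc a b)
    (hd : ∀ y ∈ Icc a b, HasDerivWithinAt f (f' y) (Icc a b) y) (hc : ContinuousOn f' (Icc a b))
    (htr : ∀ y ∈ Icc a b, μ * f' y + f y - S y = 0) :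
    μ * (f b - f x) = ∫ y in x..b, (S y - f y) := by
  have hsub : Icc x b ⊆ Icc a b := Icc_subset_Icc_left hx.1
  rw [← integral_eq_sub_of_hasDerivWithinAt_Icc hx.2 (fun y hy => (hd y (hsub hy)).mono hsub)
    (hc.mono hsub), ← intervalIntegral.integral_const_mul]
  refine intervalIntegral.integral_congr fun y hy => ?_
  rw [uIcc_of_le hx.2] at hy
  linarith [htr y (hsub hy)]

theorem integral_integral_eq_of_balance {T T' T'' : ℝ → ℝ} {ψ : ℝ → ℝ → ℝ} {a b x C : ℝ}
    (hx : x ∈ Icc a b) (hTc : ContinuousOn T (Icc a b))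
    (hT2 : ∀ y ∈ Icc a b, HasDerivWithinAt T' (T'' y) (Icc a b) y)
    (hT2c : ContinuousOn T'' (Icc a b)) (hψmeas : Measurable (uncurry ψ))
    (hC : ∀ y ∈ Icc a b, ∀ μ ∈ Icc (-1:ℝ) 1, |ψ y μ| ≤ C)
    (hode : ∀ y ∈ Icc a b, T'' y + ∫ μ in (-1:ℝ)..1, (ψ y μ - T y ^ 4) = 0) :
    ∫ μ in (-1:ℝ)..1, ∫ y in x..b, ψ y μ = 2 * (∫ y in x..b, T y ^ 4) + (T' x - T' b) := by
  have hsub : Icc x b ⊆ Icc a b := Icc_subset_Icc_left hx.1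
  have hT4 : ContinuousOn (fun y => T y ^ 4) (Icc a b) := hTc.pow 4
  have hangular : ∀ y ∈ Icc a b, ∫ μ in (-1:ℝ)..1, ψ y μ = 2 * T y ^ 4 - T'' y := by
    intro y hy
    have h := hode y hy
    rw [intervalIntegral.integral_sub
      (intervalIntegrable_of_abs_le hψmeas.of_uncurry_left (by norm_num) (hC y hy))
      intervalIntegrable_const, intervalIntegral.integral_const] at h
    norm_num at h
    linarith
  rw [← intervalIntegral_swap_of_abs_le hψmeas hx.2 (by norm_num) fun y hy => hC y (hsub hy),
    intervalIntegral.integral_congr fun y hy => hangular y (hsub (uIcc_of_le hx.2 ▸ hy)),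
    intervalIntegral.integral_sub
      (((hT4.mono hsub).intervalIntegrable_of_Icc hx.2).const_mul 2)
      ((hT2c.mono hsub).intervalIntegrable_of_Icc hx.2),
    intervalIntegral.integral_const_mul,
    integral_eq_sub_of_hasDerivWithinAt_Icc hx.2 (fun y hy => (hT2 y (hsub hy)).mono hsub)
      (hT2c.mono hsub)]
  ring
theorem stmt_7_general (B : ℝ)
    (T T' T'' : ℝ → ℝ) (ψ ψ' : ℝ → ℝ → ℝ)
    (hT1 : ∀ x ∈ Set.Icc (0:ℝ) B, HasDerivWithinAt T (T' x) (Set.Icc 0 B) x)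
    (hT2 : ∀ x ∈ Set.Icc (0:ℝ) B, HasDerivWithinAt T' (T'' x) (Set.Icc 0 B) x)
    (hT2c : ContinuousOn T'' (Set.Icc 0 B))
    (hψreg : ∀ μ ∈ Set.Icc (-1:ℝ) 1, μ ≠ 0 →
      (∀ x ∈ Set.Icc (0:ℝ) B, HasDerivWithinAt (fun y => ψ y μ) (ψ' x μ) (Set.Icc 0 B) x) ∧
      ContinuousOn (fun x => ψ' x μ) (Set.Icc 0 B))
    (hψmeas : Measurable (Function.uncurry ψ))
    (hψbdd : ∃ C : ℝ, ∀ x ∈ Set.Icc (0:ℝ) B, ∀ μ ∈ Set.Icc (-1:ℝ) 1, |ψ x μ| ≤ C)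
    (hode : ∀ x ∈ Set.Icc (0:ℝ) B, T'' x + (∫ μ in (-1:ℝ)..1, (ψ x μ - T x ^ 4)) = 0)
    (htr : ∀ x ∈ Set.Icc (0:ℝ) B, ∀ μ ∈ Set.Icc (-1:ℝ) 1, μ ≠ 0 →
      μ * ψ' x μ + ψ x μ - T x ^ 4 = 0)
    (hTB : T' B = 0)
    (hψB : ∀ μ ∈ Set.Ioc (0:ℝ) 1, ψ B μ = ψ B (-μ)) :
    ∀ x ∈ Set.Icc (0:ℝ) B, T' x = ∫ μ in (-1:ℝ)..1, μ * ψ x μ := by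
  obtain ⟨C, hC⟩ := hψbdd
  intro x hx
  have hsub : Icc x B ⊆ Icc 0 B := Icc_subset_Icc_left hx.1
  have hTc : ContinuousOn T (Icc 0 B) := fun y hy => (hT1 y hy).continuousWithinAt
  have hT4 : IntervalIntegrable (fun y => T y ^ 4) volume x B :=
    ((hTc.pow 4).mono hsub).intervalIntegrable_of_Icc hx.2
  have hflux : ∀ y ∈ Icc 0 B, IntervalIntegrable (fun μ => μ * ψ y μ) volume (-1) 1 :=
    fun y hy => (intervalIntegrable_of_abs_le hψmeas.of_uncurry_left (by norm_num)
      (hC y hy)).continuousOn_mul continuousOn_id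
  have hkey : ∀ᵐ μ, μ ∈ uIoc (-1:ℝ) 1 → ∫ y in x..B, ψ y μ
      = μ * ψ x μ - μ * ψ B μ + ∫ y in x..B, T y ^ 4 := by
    filter_upwards [Measure.ae_ne volume 0] with μ hμ0 hμ
    have hμ' : μ ∈ Icc (-1:ℝ) 1 := Ioc_subset_Icc_self (by rwa [uIoc_of_le (by norm_num)] at hμ)
    obtain ⟨hd, hc⟩ := hψreg μ hμ' hμ0
    have h := mul_sub_eq_integral_of_transport hx hd hc fun y hy => htr y hy μ hμ' hμ0
    rw [intervalIntegral.integral_sub hT4 (intervalIntegrable_of_abs_le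
      hψmeas.of_uncurry_right hx.2 fun y hy => hC y (hsub hy) μ hμ')] at h
    linarith
  have hB : B ∈ Icc 0 B := ⟨hx.1.trans hx.2, le_rfl⟩
  have hrefl : ∫ μ in (-1:ℝ)..1, μ * ψ B μ = 0 := integral_mul_eq_zero_of_even zero_le_one hψB
  have hbal := integral_integral_eq_of_balance hx hTc hT2 hT2c hψmeas hC hode
  rw [intervalIntegral.integral_congr_ae hkey, intervalIntegral.integral_add
    ((hflux x hx).sub (hflux B hB)) intervalIntegrable_const,
    intervalIntegral.integral_sub (hflux x hx) (hflux B hB), hrefl, hTB,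
    intervalIntegral.integral_const] at hbal
  norm_num at hbal
  linarith

/-- Flux relation: ∂ₓT(x) = ∫ μ ψ(x,μ) dμ for solutions of the Milne system on
[0,B] with Neumann and reflective conditions at x = B. -/
theorem stmt_7 (B : ℝ) (hB : 0 < B)
    (T T' T'' : ℝ → ℝ) (ψ ψ' : ℝ → ℝ → ℝ)
    (hT1 : ∀ x ∈ Set.Icc (0:ℝ) B, HasDerivWithinAt T (T' x) (Set.Icc 0 B) x)
    (hT2 : ∀ x ∈ Set.Icc (0:ℝ) B, HasDerivWithinAt T' (T'' x) (Set.Icc 0 B) x)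
    (hT2c : ContinuousOn T'' (Set.Icc 0 B))
    (hψreg : ∀ μ ∈ Set.Icc (-1:ℝ) 1, μ ≠ 0 →
      (∀ x ∈ Set.Icc (0:ℝ) B, HasDerivWithinAt (fun y => ψ y μ) (ψ' x μ) (Set.Icc 0 B) x) ∧
      ContinuousOn (fun x => ψ' x μ) (Set.Icc 0 B))
    (hψmeas : Measurable (Function.uncurry ψ))
    (hψbdd : ∃ C : ℝ, ∀ x ∈ Set.Icc (0:ℝ) B, ∀ μ ∈ Set.Icc (-1:ℝ) 1, |ψ x μ| ≤ C)
    (hode : ∀ x ∈ Set.Icc (0:ℝ) B, T'' x + (∫ μ in (-1:ℝ)..1, (ψ x μ - T x ^ 4)) = 0)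
    (htr : ∀ x ∈ Set.Icc (0:ℝ) B, ∀ μ ∈ Set.Icc (-1:ℝ) 1, μ ≠ 0 →
      μ * ψ' x μ + ψ x μ - T x ^ 4 = 0)
    (hTB : T' B = 0)
    (hψB : ∀ μ ∈ Set.Ioc (0:ℝ) 1, ψ B μ = ψ B (-μ)) :
    ∀ x ∈ Set.Icc (0:ℝ) B, T' x = ∫ μ in (-1:ℝ)..1, μ * ψ x μ :=
  stmt_7_general B T T' T'' ψ ψ' hT1 hT2 hT2c hψreg hψmeas hψbdd hode htr hTB hψB
end

section
/- Let B > 0, γ > 0 and T_b ∈ [0,γ]. Let φ : ℝ → ℝ be continuous, strictly increasing and bounded, with φ(0) ≤ 0. Let g ∈ C([0,B]) satisfy 0 ≤ g(x) ≤ φ(γ) for all x ∈ [0,B]. Then there exists a function T ∈ C²([0,B]) such that −T''(x) + φ(T(x)) = g(x) for all x ∈ [0,B], T(0) = T_b, T'(B) = 0, and 0 ≤ T(x) ≤ γ for all x ∈ [0,B]. -/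
/-!
Replace `φ` by its Moreau envelopes `moreau φ n`: they are Lipschitz, bounded by the same constant
as `φ`, and converge to `φ` along convergent sequences. For a Lipschitz nonlinearity the problem is
solved by shooting: for each initial slope `s` the Volterra equation
`u x = a + s x + ∫₀ˣ (x - t) (F (u t) - g t) dt` has a unique solution, because the `k`-th iterate
of its Picard map is `(L B²)ᵏ / (2k)!`-Lipschitz; this solution depends continuously on `s`, and the
intermediate value theorem yields a slope with `u' B = 0`. The approximate solutions are uniformly
Lipschitz, so Arzelà–Ascoli and dominated convergence produce a solution for `φ` itself.

The bounds `0 ≤ T ≤ γ` come from the maximum principle: at a maximum of `T` above `γ` (which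
cannot be at `0`) one has `T' = 0`, either because the maximum is interior or by the Neumann
condition, while `T'' = φ T - g > 0` there; so `T` strictly decreases into the maximum from the left.
-/

open Set Filter Topology
open scoped NNReal

namespace DirichletNeumann

noncomputable def iteratedPrimitive (h : ℝ → ℝ) (x : ℝ) : ℝ :=
  ∫ t in (0:ℝ)..x, (x - t) * h t

section IteratedPrimitive

variable {h k : ℝ → ℝ}

lemma iteratedPrimitive_eq (hc : Continuous h) (x : ℝ) :
    iteratedPrimitive h x = x * (∫ t in (0:ℝ)..x, h t) - ∫ t in (0:ℝ)..x, t * h t := by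
  rw [iteratedPrimitive, ← intervalIntegral.integral_const_mul,
    ← intervalIntegral.integral_sub (Continuous.intervalIntegrable (by fun_prop) _ _)
      (Continuous.intervalIntegrable (by fun_prop) _ _)]
  simp only [sub_mul]

lemma hasDerivAt_iteratedPrimitive (hc : Continuous h) (x : ℝ) :
    HasDerivAt (iteratedPrimitive h) (∫ t in (0:ℝ)..x, h t) x := by
  rw [funext (iteratedPrimitive_eq hc)]
  exact (((hasDerivAt_id' x).fun_mul (hc.integral_hasStrictDerivAt 0 x).hasDerivAt).fun_sub
    ((continuous_id.mul hc).integral_hasStrictDerivAt 0 x).hasDerivAt).congr_deriv (by simp)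

lemma iteratedPrimitive_sub (hh : Continuous h) (hk : Continuous k) (x : ℝ) :
    iteratedPrimitive h x - iteratedPrimitive k x = iteratedPrimitive (fun t => h t - k t) x := by
  rw [iteratedPrimitive, iteratedPrimitive, iteratedPrimitive,
    ← intervalIntegral.integral_sub (Continuous.intervalIntegrable (by fun_prop) _ _)
      (Continuous.intervalIntegrable (by fun_prop) _ _)]
  simp only [mul_sub]

lemma iteratedPrimitive_const_mul_pow (c : ℝ) (n : ℕ) (x : ℝ) :
    iteratedPrimitive (fun t => c * t ^ n) x = c * x ^ (n + 2) / ((n + 1) * (n + 2)) := by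
  have hpow : (fun t : ℝ => t * (c * t ^ n)) = fun t => c * t ^ (n + 1) := by
    ext t; ring
  rw [iteratedPrimitive_eq (by fun_prop), hpow, intervalIntegral.integral_const_mul,
    intervalIntegral.integral_const_mul, integral_pow, integral_pow]
  push_cast
  field_simp
  ring

lemma abs_iteratedPrimitive_le (hh : Continuous h) (hk : Continuous k) {x : ℝ} (hx : 0 ≤ x)
    (hle : ∀ t ∈ Icc 0 x, |h t| ≤ k t) : |iteratedPrimitive h x| ≤ iteratedPrimitive k x := by
  refine (intervalIntegral.abs_integral_le_integral_abs hx).trans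
    (intervalIntegral.integral_mono_on hx (Continuous.intervalIntegrable (by fun_prop) _ _)
      (Continuous.intervalIntegrable (by fun_prop) _ _) fun t ht => ?_)
  rw [abs_mul, abs_of_nonneg (sub_nonneg.2 ht.2)]
  exact mul_le_mul_of_nonneg_left (hle t ht) (sub_nonneg.2 ht.2)

end IteratedPrimitive

noncomputable def ivpSolution (a s : ℝ) (q : ℝ → ℝ) (x : ℝ) : ℝ :=
  a + s * x + iteratedPrimitive q x

section IvpSolution

variable {a s : ℝ} {q : ℝ → ℝ}

@[simp]
lemma ivpSolution_zero : ivpSolution a s q 0 = a := by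
  simp [ivpSolution, iteratedPrimitive]

lemma hasDerivAt_ivpSolution (hq : Continuous q) (x : ℝ) :
    HasDerivAt (ivpSolution a s q) (s + ∫ t in (0:ℝ)..x, q t) x :=
  (((hasDerivAt_id' x).const_mul s).const_add a).fun_add (hasDerivAt_iteratedPrimitive hq x)
    |>.congr_deriv (by ring)

lemma continuous_ivpSolution (hq : Continuous q) : Continuous (ivpSolution a s q) :=
  continuous_iff_continuousAt.2 fun x => (hasDerivAt_ivpSolution hq x).continuousAt

lemma hasDerivAt_deriv_ivpSolution (hq : Continuous q) (x : ℝ) :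
    HasDerivAt (fun y => s + ∫ t in (0:ℝ)..y, q t) (q x) x :=
  (hq.integral_hasStrictDerivAt 0 x).hasDerivAt.const_add s

lemma lipschitzOnWith_ivpSolution {B K : ℝ} (hK : ∀ t, |q t| ≤ K) (hs : |s| ≤ K * B)
    (hq : Continuous q) : LipschitzOnWith (2 * K * B).toNNReal (ivpSolution a s q) (Icc 0 B) := by
  refine LipschitzOnWith.of_dist_le_mul fun x hx y hy => ?_
  have hderiv : ∀ z ∈ Icc 0 B, ‖s + ∫ t in (0:ℝ)..z, q t‖ ≤ 2 * K * B := fun z hz => by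
    have hint := intervalIntegral.norm_integral_le_of_norm_le_const (a := 0) (b := z)
      fun t _ => (Real.norm_eq_abs (q t)).trans_le (hK t)
    rw [sub_zero, abs_of_nonneg hz.1] at hint
    have hKz : K * z ≤ K * B := mul_le_mul_of_nonneg_left hz.2 ((abs_nonneg _).trans (hK 0))
    linarith [norm_add_le s (∫ t in (0:ℝ)..z, q t), Real.norm_eq_abs s]
  rw [Real.coe_toNNReal _ (by nlinarith [hK 0, abs_nonneg (q 0), abs_nonneg s]), Real.dist_eq,
    Real.dist_eq]
  exact (convex_Icc 0 B).norm_image_sub_le_of_norm_hasDerivWithin_le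
    (fun z _ => (hasDerivAt_ivpSolution hq z).hasDerivWithinAt) hderiv hy hx

end IvpSolution

lemma dist_iterate_iterate_le {X : Type*} [PseudoMetricSpace X] {f g : X → X} {K : ℝ≥0} {ε : ℝ}
    (hf : LipschitzWith K f) (hfg : ∀ x, dist (f x) (g x) ≤ ε) (n : ℕ) (x : X) :
    dist (f^[n] x) (g^[n] x) ≤ (∑ i ∈ Finset.range n, (K : ℝ) ^ i) * ε := by
  induction n with
  | zero => simp
  | succ n ih =>
    rw [Function.iterate_succ_apply', Function.iterate_succ_apply', geom_sum_succ]
    calc _ ≤ dist (f (f^[n] x)) (f (g^[n] x)) + dist (f (g^[n] x)) (g (g^[n] x)) :=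
          dist_triangle _ _ _
      _ ≤ K * ((∑ i ∈ Finset.range n, (K : ℝ) ^ i) * ε) + ε :=
          add_le_add ((hf.dist_le_mul _ _).trans (mul_le_mul_of_nonneg_left ih K.2)) (hfg _)
      _ = _ := by ring

section Picard

variable {B : ℝ} (hB : 0 ≤ B) (a : ℝ) (F g : C(ℝ, ℝ))

noncomputable def rhs (u : C(Icc 0 B, ℝ)) (t : ℝ) : ℝ :=
  F (IccExtend hB u t) - g t

lemma continuous_rhs (u : C(Icc 0 B, ℝ)) : Continuous (rhs hB F g u) := by
  unfold rhs; fun_prop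

noncomputable def picard (s : ℝ) (u : C(Icc 0 B, ℝ)) : C(Icc 0 B, ℝ) :=
  ⟨fun x => ivpSolution a s (rhs hB F g u) x,
    (continuous_ivpSolution (continuous_rhs hB F g u)).comp continuous_subtype_val⟩

lemma picard_apply (s : ℝ) (u : C(Icc 0 B, ℝ)) (x : Icc 0 B) :
    picard hB a F g s u x = ivpSolution a s (rhs hB F g u) x := rfl

variable {F g} {L : ℝ≥0}

lemma abs_picard_iterate_sub_le (hF : LipschitzWith L F) (s : ℝ) (j : ℕ) (u v : C(Icc 0 B, ℝ))
    (x : Icc 0 B) :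
    |(picard hB a F g s)^[j] u x - (picard hB a F g s)^[j] v x|
      ≤ dist u v * L ^ j * (x : ℝ) ^ (2 * j) / (2 * j).factorial := by
  induction j generalizing x with
  | zero => simpa [Real.dist_eq] using ContinuousMap.dist_apply_le_dist (f := u) (g := v) x
  | succ j ih =>
    set w₁ := (picard hB a F g s)^[j] u
    set w₂ := (picard hB a F g s)^[j] v
    set c : ℝ := dist u v * L ^ (j + 1) / (2 * j).factorial
    have hbound : ∀ t ∈ Icc 0 (x : ℝ), |rhs hB F g w₁ t - rhs hB F g w₂ t| ≤ c * t ^ (2 * j) :=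
      fun t ht => by
        have htB : t ∈ Icc 0 B := ⟨ht.1, ht.2.trans x.2.2⟩
        calc _ = |F (IccExtend hB w₁ t) - F (IccExtend hB w₂ t)| := by
              rw [rhs, rhs, sub_sub_sub_cancel_right]
          _ ≤ L * |w₁ ⟨t, htB⟩ - w₂ ⟨t, htB⟩| := by
              simpa [Real.dist_eq, IccExtend_of_mem hB _ htB] using
                hF.dist_le_mul (IccExtend hB w₁ t) (IccExtend hB w₂ t)
          _ ≤ L * (dist u v * L ^ j * t ^ (2 * j) / (2 * j).factorial) :=
              mul_le_mul_of_nonneg_left (ih ⟨t, htB⟩) L.2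
          _ = c * t ^ (2 * j) := by ring
    have hw₁ := continuous_rhs hB F g w₁
    have hw₂ := continuous_rhs hB F g w₂
    rw [Function.iterate_succ_apply', Function.iterate_succ_apply', picard_apply, picard_apply]
    calc _ = |iteratedPrimitive (fun t => rhs hB F g w₁ t - rhs hB F g w₂ t) x| := by
          rw [ivpSolution, ivpSolution, add_sub_add_left_eq_sub, iteratedPrimitive_sub hw₁ hw₂]
      _ ≤ iteratedPrimitive (fun t => c * t ^ (2 * j)) x :=
          abs_iteratedPrimitive_le (by fun_prop) (by fun_prop) x.2.1 hbound
      _ = _ := by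
          rw [iteratedPrimitive_const_mul_pow, show 2 * (j + 1) = 2 * j + 1 + 1 by ring,
            Nat.factorial_succ, Nat.factorial_succ]
          simp only [c]
          push_cast
          field_simp
          ring

lemma lipschitzWith_picard_iterate (hF : LipschitzWith L F) (s : ℝ) (j : ℕ) :
    LipschitzWith ((L * B ^ 2) ^ j / (2 * j).factorial).toNNReal (picard hB a F g s)^[j] := by
  refine LipschitzWith.of_dist_le_mul fun u v => ?_
  rw [Real.coe_toNNReal _ (by positivity), ContinuousMap.dist_le (by positivity)]
  intro x
  rw [Real.dist_eq]
  calc _ ≤ dist u v * L ^ j * (x : ℝ) ^ (2 * j) / (2 * j).factorial :=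
        abs_picard_iterate_sub_le hB a hF s j u v x
    _ ≤ dist u v * L ^ j * B ^ (2 * j) / (2 * j).factorial := by gcongr; exacts [x.2.1, x.2.2]
    _ = _ := by rw [mul_pow, ← pow_mul]; ring

lemma exists_contractingWith_picard_iterate (hF : LipschitzWith L F) :
    ∃ k : ℕ, ∃ K : ℝ≥0, ∀ s, ContractingWith K (picard hB a F g s)^[k] := by
  obtain ⟨k, hk⟩ := ((FloorSemiring.tendsto_pow_div_factorial_atTop ((L : ℝ) * B ^ 2)).eventually
    (gt_mem_nhds zero_lt_one)).exists
  have hle : (L * B ^ 2) ^ k / (2 * k).factorial ≤ ((L : ℝ) * B ^ 2) ^ k / k.factorial :=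
    div_le_div_of_nonneg_left (by positivity) (by positivity)
      (by exact_mod_cast Nat.factorial_le (by omega))
  refine ⟨k, _, fun s => ⟨?_, lipschitzWith_picard_iterate hB a hF s k⟩⟩
  rw [← Real.toNNReal_one]
  exact (Real.toNNReal_lt_toNNReal_iff one_pos).2 (hle.trans_lt hk)

lemma dist_picard_picard_le (s σ : ℝ) (u : C(Icc 0 B, ℝ)) :
    dist (picard hB a F g s u) (picard hB a F g σ u) ≤ B * |s - σ| := by
  refine (ContinuousMap.dist_le (by positivity)).2 fun x => ?_
  rw [Real.dist_eq, picard_apply, picard_apply, ivpSolution, ivpSolution, add_sub_add_right_eq_sub,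
    add_sub_add_left_eq_sub, ← sub_mul, abs_mul, abs_of_nonneg x.2.1, mul_comm]
  exact mul_le_mul_of_nonneg_right x.2.2 (abs_nonneg _)

variable (F g) in
lemma continuous_integral_rhs :
    Continuous fun u : C(Icc 0 B, ℝ) => ∫ t in (0:ℝ)..B, rhs hB F g u t :=
  intervalIntegral.continuous_parametric_intervalIntegral_of_continuous' (by unfold rhs; fun_prop)
    _ _

lemma abs_integral_rhs_le {K : ℝ} (hK : ∀ y t, |F y - g t| ≤ K) (u : C(Icc 0 B, ℝ)) :
    |∫ t in (0:ℝ)..B, rhs hB F g u t| ≤ K * B := by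
  simpa [rhs, abs_of_nonneg hB] using intervalIntegral.norm_integral_le_of_norm_le_const
    (a := 0) (b := B) fun t _ => (Real.norm_eq_abs _).trans_le (hK _ t)

variable (F g) in
/-- Integral form of `-u'' + F(u) = g`, `u(0) = a`, `u'(B) = 0`, where `s` plays the role of
`u'(0)`. -/
def IsMildSolution (s : ℝ) (u : C(Icc 0 B, ℝ)) : Prop :=
  Function.IsFixedPt (picard hB a F g s) u ∧ s + ∫ t in (0:ℝ)..B, rhs hB F g u t = 0

theorem exists_isMildSolution_of_lipschitzWith (hF : LipschitzWith L F) {K : ℝ}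
    (hK : ∀ y t, |F y - g t| ≤ K) : ∃ s u, IsMildSolution hB a F g s u := by
  obtain ⟨k, κ, hκ⟩ := exists_contractingWith_picard_iterate hB a (g := g) hF
  set sol : ℝ → C(Icc 0 B, ℝ) := fun s => (hκ s).fixedPoint
  set c : ℝ≥0 := (L * B ^ 2 / 2).toNNReal
  have hstep (s : ℝ) : LipschitzWith c (picard hB a F g s) := by
    simpa using lipschitzWith_picard_iterate hB a (g := g) hF s 1
  have hsol : LipschitzWith _ sol := LipschitzWith.of_dist_le' fun s σ => by
    have := (hκ s).fixedPoint_lipschitz_in_map (hκ σ) fun u =>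
      dist_iterate_iterate_le (hstep s) (fun w => dist_picard_picard_le hB a s σ w) k u
    rw [Real.dist_eq]
    exact this.trans_eq (by ring : _ = (∑ i ∈ Finset.range k, (c : ℝ) ^ i) * B / (1 - κ) * |s - σ|)
  set shoot : ℝ → ℝ := fun s => s + ∫ t in (0:ℝ)..B, rhs hB F g (sol s) t
  have hshoot : Continuous shoot :=
    continuous_id.add ((continuous_integral_rhs hB F g).comp hsol.continuous)
  have hKB : 0 ≤ K * B := (abs_nonneg _).trans (abs_integral_rhs_le hB hK (sol 0))
  have hsign : (0 : ℝ) ∈ Icc (shoot (-(K * B))) (shoot (K * B)) :=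
    ⟨by linarith [(abs_le.1 (abs_integral_rhs_le hB hK (sol (-(K * B))))).2],
      by linarith [(abs_le.1 (abs_integral_rhs_le hB hK (sol (K * B)))).1]⟩
  obtain ⟨s, -, hs⟩ := intermediate_value_Icc (neg_le_self hKB) hshoot.continuousOn hsign
  exact ⟨s, sol s, (hκ s).isFixedPt_fixedPoint_iterate, hs⟩

end Picard

section Moreau

variable {φ : ℝ → ℝ} {C : ℝ}

noncomputable def moreau (φ : ℝ → ℝ) (n : ℕ) (y : ℝ) : ℝ :=
  ⨅ s, φ s + (n + 1) * |y - s|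

lemma bddBelow_moreau (hC : ∀ t, |φ t| ≤ C) (n : ℕ) (y : ℝ) :
    BddBelow (range fun s => φ s + (n + 1) * |y - s|) := by
  refine ⟨-C, ?_⟩
  rintro _ ⟨s, rfl⟩
  have : 0 ≤ ((n : ℝ) + 1) * |y - s| := by positivity
  linarith [(abs_le.1 (hC s)).1]

lemma moreau_le (hC : ∀ t, |φ t| ≤ C) (n : ℕ) (y : ℝ) : moreau φ n y ≤ φ y := by
  simpa [moreau] using ciInf_le (bddBelow_moreau hC n y) y

lemma abs_moreau_le (hC : ∀ t, |φ t| ≤ C) (n : ℕ) (y : ℝ) : |moreau φ n y| ≤ C := by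
  refine abs_le.2 ⟨le_ciInf fun s => ?_, (moreau_le hC n y).trans (abs_le.1 (hC y)).2⟩
  have : 0 ≤ ((n : ℝ) + 1) * |y - s| := by positivity
  linarith [(abs_le.1 (hC s)).1]

lemma lipschitzWith_moreau (hC : ∀ t, |φ t| ≤ C) (n : ℕ) :
    LipschitzWith (n + 1) (moreau φ n) := by
  refine LipschitzWith.of_le_add_mul _ fun y z => ?_
  have hle : moreau φ n y - (n + 1) * |y - z| ≤ moreau φ n z := le_ciInf fun s => by
    have h1 : moreau φ n y ≤ φ s + (n + 1) * |y - s| := ciInf_le (bddBelow_moreau hC n y) s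
    have h2 : ((n : ℝ) + 1) * |y - s| ≤ (n + 1) * (|y - z| + |z - s|) :=
      mul_le_mul_of_nonneg_left (abs_sub_le y z s) (by positivity)
    linarith
  rw [Real.dist_eq]
  push_cast
  linarith

lemma tendsto_moreau {y₀ : ℝ} (hφ : ContinuousAt φ y₀) (hC : ∀ t, |φ t| ≤ C) {ι : Type*}
    {l : Filter ι} {n : ι → ℕ} {y : ι → ℝ} (hn : Tendsto n l atTop) (hy : Tendsto y l (𝓝 y₀)) :
    Tendsto (fun i => moreau φ (n i) (y i)) l (𝓝 (φ y₀)) := by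
  refine tendsto_order.2 ⟨fun b hb => ?_, fun b hb => ?_⟩
  · obtain ⟨b', hbb', hb'⟩ := exists_between hb
    obtain ⟨δ, hδ, hφδ⟩ := Metric.eventually_nhds_iff.1 (hφ.eventually (lt_mem_nhds hb'))
    obtain ⟨N, hN⟩ := exists_nat_ge (2 * (b' + C) / δ)
    filter_upwards [hn.eventually_ge_atTop N, hy.eventually (Metric.ball_mem_nhds y₀ (half_pos hδ))]
      with i hni hyi
    refine hbb'.trans_le (le_ciInf fun s => ?_)
    have hpen : 0 ≤ ((n i : ℝ) + 1) * |y i - s| := by positivity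
    by_cases hs : dist s y₀ < δ
    · linarith [hφδ hs]
    · -- far from `y₀` the penalty term alone exceeds `b' + C`
      rw [Real.dist_eq] at hyi
      rw [not_lt, Real.dist_eq] at hs
      have hfar : δ / 2 ≤ |y i - s| := by
        linarith [abs_sub_le s (y i) y₀, abs_sub_comm s (y i)]
      have hNn : (N : ℝ) ≤ n i := by exact_mod_cast hni
      rw [div_le_iff₀ hδ] at hN
      nlinarith [(abs_le.1 (hC s)).1]
  · filter_upwards [(hφ.tendsto.comp hy).eventually (gt_mem_nhds hb)] with i hi
    exact (moreau_le hC _ _).trans_lt hi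

end Moreau

theorem exists_subseq_tendsto_of_lipschitzWith {X : Type*} [PseudoMetricSpace X] [CompactSpace X]
    {Λ : ℝ≥0} {M : ℝ} (u : ℕ → C(X, ℝ)) (hu : ∀ n, LipschitzWith Λ (u n))
    (hM : ∀ n x, |u n x| ≤ M) :
    ∃ v : C(X, ℝ), ∃ ψ : ℕ → ℕ, StrictMono ψ ∧ Tendsto (u ∘ ψ) atTop (𝓝 v) := by
  let e := ContinuousMap.isometryEquivBoundedOfCompact X ℝ
  have hcpt : IsCompact (closure (range (e ∘ u))) := by
    refine BoundedContinuousFunction.arzela_ascoli (Icc (-M) M) isCompact_Icc _ ?_ ?_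
    · rintro _ x ⟨n, rfl⟩
      exact abs_le.1 (hM n x)
    · refine (LipschitzWith.uniformEquicontinuous _ Λ ?_).equicontinuous
      rintro ⟨_, n, rfl⟩
      exact hu n
  obtain ⟨w, -, ψ, hψ, hlim⟩ := hcpt.tendsto_subseq fun n => subset_closure (mem_range_self n)
  refine ⟨e.symm w, ψ, hψ, ?_⟩
  simpa [Function.comp_def] using (e.symm.continuous.tendsto w).comp hlim

theorem tendsto_intervalIntegral_of_abs_le {f : ℕ → ℝ → ℝ} {f₀ bound : ℝ → ℝ} {a b : ℝ}
    (hf : ∀ k, Continuous (f k)) (hbound : Continuous bound) (hle : ∀ k t, |f k t| ≤ bound t)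
    (hlim : ∀ t, Tendsto (fun k => f k t) atTop (𝓝 (f₀ t))) :
    Tendsto (fun k => ∫ t in a..b, f k t) atTop (𝓝 (∫ t in a..b, f₀ t)) :=
  intervalIntegral.tendsto_integral_filter_of_dominated_convergence bound
    (.of_forall fun k => (hf k).aestronglyMeasurable)
    (.of_forall fun k => .of_forall fun t _ => (Real.norm_eq_abs _).trans_le (hle k t))
    (hbound.intervalIntegrable _ _) (.of_forall fun t _ => hlim t)

section MildSolution

variable {B : ℝ} {hB : 0 ≤ B} {a s K : ℝ} {F g : C(ℝ, ℝ)} {u : C(Icc 0 B, ℝ)}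

lemma IsMildSolution.apply_eq (h : IsMildSolution hB a F g s u) {x : ℝ} (hx : x ∈ Icc 0 B) :
    u ⟨x, hx⟩ = ivpSolution a s (rhs hB F g u) x :=
  (DFunLike.congr_fun h.1 ⟨x, hx⟩).symm

lemma IsMildSolution.lipschitzWith (h : IsMildSolution hB a F g s u)
    (hK : ∀ y t, |F y - g t| ≤ K) : LipschitzWith (2 * K * B).toNNReal u := by
  have hs : |s| ≤ K * B := by
    rw [← neg_eq_of_add_eq_zero_left h.2, abs_neg]
    exact abs_integral_rhs_le hB hK u
  have hu : ⇑u = fun x : Icc 0 B => ivpSolution a s (rhs hB F g u) x :=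
    funext fun x => h.apply_eq x.2
  rw [hu]
  exact (lipschitzOnWith_ivpSolution (fun t => hK _ t) hs (continuous_rhs hB F g u)).to_restrict

lemma IsMildSolution.abs_le (h : IsMildSolution hB a F g s u) (hK : ∀ y t, |F y - g t| ≤ K)
    (x : Icc 0 B) : |u x| ≤ |a| + 2 * K * B * B := by
  have h0 : u ⟨0, left_mem_Icc.2 hB⟩ = a := by rw [h.apply_eq, ivpSolution_zero]
  have hdist := (h.lipschitzWith hK).dist_le_mul x ⟨0, left_mem_Icc.2 hB⟩
  have hK0 : 0 ≤ K := (abs_nonneg _).trans (hK 0 0)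
  rw [h0, Real.dist_eq, Real.coe_toNNReal _ (by positivity), Subtype.dist_eq, Real.dist_eq,
    sub_zero, abs_of_nonneg x.2.1] at hdist
  have : 2 * K * B * x ≤ 2 * K * B * B := mul_le_mul_of_nonneg_left x.2.2 (by positivity)
  linarith [abs_sub_abs_le_abs_sub (u x) a]

lemma IsMildSolution.of_tendsto {Fk : ℕ → C(ℝ, ℝ)} {sk : ℕ → ℝ} {uk : ℕ → C(Icc 0 B, ℝ)}
    (hk : ∀ k, IsMildSolution hB a (Fk k) g (sk k) (uk k)) (hK : ∀ k y t, |Fk k y - g t| ≤ K)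
    (hu : Tendsto uk atTop (𝓝 u))
    (hF : ∀ t, Tendsto (fun k => Fk k (IccExtend hB (uk k) t)) atTop (𝓝 (F (IccExtend hB u t)))) :
    IsMildSolution hB a F g (-∫ t in (0:ℝ)..B, rhs hB F g u t) u := by
  have hrhs (t : ℝ) : Tendsto (fun k => rhs hB (Fk k) g (uk k) t) atTop (𝓝 (rhs hB F g u t)) :=
    (hF t).sub_const _
  have hs : Tendsto sk atTop (𝓝 (-∫ t in (0:ℝ)..B, rhs hB F g u t)) := by
    rw [show sk = _ from funext fun k => eq_neg_of_add_eq_zero_left (hk k).2]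
    exact (tendsto_intervalIntegral_of_abs_le (fun k => continuous_rhs hB _ g _)
      continuous_const (fun k t => hK k _ t) hrhs).neg
  refine ⟨ContinuousMap.ext fun x => ?_, neg_add_cancel _⟩
  have hlim : Tendsto (fun k => uk k x) atTop
      (𝓝 (picard hB a F g (-∫ t in (0:ℝ)..B, rhs hB F g u t) u x)) := by
    have heq : (fun k => uk k x) = fun k => ivpSolution a (sk k) (rhs hB (Fk k) g (uk k)) x :=
      funext fun k => (hk k).apply_eq x.2
    rw [heq, picard_apply]
    unfold ivpSolution iteratedPrimitive
    refine (tendsto_const_nhds.add (hs.mul_const _)).add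
      (tendsto_intervalIntegral_of_abs_le (bound := fun t => |(x : ℝ) - t| * K)
        (fun k => by have := continuous_rhs hB (Fk k) g (uk k); fun_prop) (by fun_prop)
        (fun k t => ?_) fun t => (hrhs t).const_mul _)
    rw [abs_mul]
    exact mul_le_mul_of_nonneg_left (hK k _ t) (abs_nonneg _)
  exact tendsto_nhds_unique hlim (((continuous_eval_const x).tendsto u).comp hu)

theorem exists_isMildSolution (hB : 0 ≤ B) (a : ℝ) {C D : ℝ} (hF : ∀ y, |F y| ≤ C)
    (hg : ∀ t, |g t| ≤ D) : ∃ s u, IsMildSolution hB a F g s u := by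
  set Fk : ℕ → C(ℝ, ℝ) := fun k => ⟨moreau F k, (lipschitzWith_moreau hF k).continuous⟩
  have hK (k : ℕ) (y t : ℝ) : |Fk k y - g t| ≤ C + D :=
    (abs_sub _ _).trans (add_le_add (abs_moreau_le hF k y) (hg t))
  choose sk uk hk using fun k =>
    exists_isMildSolution_of_lipschitzWith hB a (lipschitzWith_moreau hF k) (hK k)
  obtain ⟨u, ψ, hψ, hu⟩ := exists_subseq_tendsto_of_lipschitzWith uk
    (fun k => (hk k).lipschitzWith (hK k)) fun k => (hk k).abs_le (hK k)
  refine ⟨_, u, IsMildSolution.of_tendsto (fun k => hk (ψ k)) (fun k => hK (ψ k)) hu fun t => ?_⟩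
  exact tendsto_moreau F.continuous.continuousAt hF hψ.tendsto_atTop
    (((continuous_eval_const _).tendsto u).comp hu)

end MildSolution

theorem le_of_secondDeriv_pos_above {T T' T'' : ℝ → ℝ} {B γ : ℝ}
    (hT : ∀ x, HasDerivAt T (T' x) x) (hT' : ∀ x, HasDerivAt T' (T'' x) x) (h0 : T 0 ≤ γ)
    (hB : T' B = 0) (hpos : ∀ x ∈ Icc 0 B, γ < T x → 0 < T'' x) : ∀ x ∈ Icc 0 B, T x ≤ γ := by
  by_contra! ⟨z, hz, hzγ⟩
  have hTc : Continuous T := continuous_iff_continuousAt.2 fun x => (hT x).continuousAt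
  have hT'c : Continuous T' := continuous_iff_continuousAt.2 fun x => (hT' x).continuousAt
  obtain ⟨w, hw, hmax⟩ := isCompact_Icc.exists_isMaxOn ⟨z, hz⟩ hTc.continuousOn
  have hwγ : γ < T w := hzγ.trans_le (hmax hz)
  have hw0 : 0 < w := hw.1.lt_of_ne (by rintro rfl; linarith)
  have hT'w : T' w = 0 := by
    rcases hw.2.lt_or_eq with hwB | rfl
    · exact (hmax.isLocalMax (Icc_mem_nhds hw0 hwB)).hasDerivAt_eq_zero (hT w)
    · exact hB
  obtain ⟨r, hr, hball⟩ := Metric.isOpen_iff.1 (isOpen_lt continuous_const hTc) w hwγ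
  set δ := min (r / 2) w
  have hδ : 0 < δ := lt_min (half_pos hr) hw0
  have hsub : Icc (w - δ) w ⊆ Icc 0 B := fun y hy => ⟨by linarith [min_le_right (r / 2) w, hy.1],
    hy.2.trans hw.2⟩
  have habove : ∀ y ∈ Icc (w - δ) w, γ < T y := fun y hy => hball <| by
    rw [Metric.mem_ball, Real.dist_eq, abs_of_nonpos (by linarith [hy.2])]
    linarith [min_le_left (r / 2) w, hy.1]
  -- on `[w - δ, w]` the slope increases to `T' w = 0`, so `T` decreases towards its maximum
  have hT'mono : StrictMonoOn T' (Icc (w - δ) w) :=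
    strictMonoOn_of_deriv_pos (convex_Icc _ _) hT'c.continuousOn fun y hy => by
      rw [interior_Icc] at hy
      rw [(hT' y).deriv]
      exact hpos y (hsub (Ioo_subset_Icc_self hy)) (habove y (Ioo_subset_Icc_self hy))
  have hTanti : StrictAntiOn T (Icc (w - δ) w) :=
    strictAntiOn_of_deriv_neg (convex_Icc _ _) hTc.continuousOn fun y hy => by
      rw [interior_Icc] at hy
      rw [(hT y).deriv, ← hT'w]
      exact hT'mono (Ioo_subset_Icc_self hy) (right_mem_Icc.2 (by linarith)) hy.2
  have hleft : w - δ ∈ Icc (w - δ) w := left_mem_Icc.2 (by linarith)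
  have hle : T (w - δ) ≤ T w := hmax (hsub hleft)
  linarith [hTanti hleft (right_mem_Icc.2 (by linarith)) (by linarith)]

theorem mem_Icc_of_secondOrder_ode {φ g T T' T'' : ℝ → ℝ} {B lo hi : ℝ} (hφ : StrictMono φ)
    (hT : ∀ x, HasDerivAt T (T' x) x) (hT' : ∀ x, HasDerivAt T' (T'' x) x)
    (hode : ∀ x ∈ Icc 0 B, -T'' x + φ (T x) = g x) (hg : ∀ x ∈ Icc 0 B, g x ∈ Icc (φ lo) (φ hi))
    (h0 : T 0 ∈ Icc lo hi) (hB : T' B = 0) : ∀ x ∈ Icc 0 B, T x ∈ Icc lo hi := by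
  have hupper := le_of_secondDeriv_pos_above hT hT' h0.2 hB fun x hx hTx => by
    linarith [hode x hx, (hg x hx).2, hφ hTx]
  have hlower := le_of_secondDeriv_pos_above (T := fun x => -T x) (γ := -lo)
    (fun x => (hT x).neg) (fun x => (hT' x).neg) (neg_le_neg h0.1) (by rw [hB, neg_zero])
    fun x hx hTx => by linarith [hode x hx, (hg x hx).1, hφ (by linarith : T x < lo)]
  exact fun x hx => ⟨neg_le_neg_iff.1 (hlower x hx), hupper x hx⟩

end DirichletNeumann

open DirichletNeumann

theorem stmt_9_general (B γ Tb : ℝ) (hB : 0 < B) (hTb : Tb ∈ Set.Icc 0 γ)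
    (φ : ℝ → ℝ) (hφc : Continuous φ) (hφmono : StrictMono φ)
    (hφbdd : ∃ C : ℝ, ∀ t : ℝ, |φ t| ≤ C) (hφ0 : φ 0 ≤ 0)
    (g : ℝ → ℝ) (hgc : ContinuousOn g (Set.Icc 0 B))
    (hg : ∀ x ∈ Set.Icc (0:ℝ) B, g x ∈ Set.Icc 0 (φ γ)) :
    ∃ T T' T'' : ℝ → ℝ,
      (∀ x ∈ Set.Icc (0:ℝ) B, HasDerivWithinAt T (T' x) (Set.Icc 0 B) x) ∧
      (∀ x ∈ Set.Icc (0:ℝ) B, HasDerivWithinAt T' (T'' x) (Set.Icc 0 B) x) ∧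
      ContinuousOn T'' (Set.Icc 0 B) ∧
      (∀ x ∈ Set.Icc (0:ℝ) B, -T'' x + φ (T x) = g x) ∧
      T 0 = Tb ∧ T' B = 0 ∧
      (∀ x ∈ Set.Icc (0:ℝ) B, T x ∈ Set.Icc 0 γ) := by
  obtain ⟨C, hC⟩ := hφbdd
  let ĝ : C(ℝ, ℝ) := ⟨IccExtend hB.le ((Icc 0 B).domRestrict g), hgc.domRestrict.Icc_extend'⟩
  have hĝ (t : ℝ) : ĝ t ∈ Icc 0 (φ γ) := hg _ (projIcc 0 B hB.le t).2
  have hĝg {x : ℝ} (hx : x ∈ Icc 0 B) : ĝ x = g x :=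
    IccExtend_of_mem hB.le ((Icc 0 B).domRestrict g) hx
  obtain ⟨s, u, hu⟩ := exists_isMildSolution (F := ⟨φ, hφc⟩) hB.le Tb hC (D := φ γ)
    fun t => abs_le.2 ⟨by linarith [(hĝ t).1, (hĝ t).2], (hĝ t).2⟩
  set q := rhs hB.le ⟨φ, hφc⟩ ĝ u
  have hq : Continuous q := continuous_rhs _ _ _ u
  have hT := hasDerivAt_ivpSolution (a := Tb) (s := s) hq
  have hT' := hasDerivAt_deriv_ivpSolution (s := s) hq
  have hode (x : ℝ) (hx : x ∈ Icc 0 B) : -q x + φ (ivpSolution Tb s q x) = g x := by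
    rw [← hu.apply_eq hx]
    simp [q, rhs, IccExtend_of_mem hB.le _ hx, hĝg hx]
  refine ⟨_, _, q, fun x _ => (hT x).hasDerivWithinAt, fun x _ => (hT' x).hasDerivWithinAt,
    hq.continuousOn, hode, ivpSolution_zero, hu.2, mem_Icc_of_secondOrder_ode hφmono hT hT' hode
      (fun x hx => ⟨hφ0.trans (hg x hx).1, (hg x hx).2⟩) (by rwa [ivpSolution_zero]) hu.2⟩

/-- Existence for the second order boundary value problem
−T'' + φ(T) = g on [0,B] with T(0) = T_b, T'(B) = 0, and 0 ≤ T ≤ γ. -/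
theorem stmt_9 (B γ Tb : ℝ) (hB : 0 < B) (hγ : 0 < γ) (hTb : Tb ∈ Set.Icc 0 γ)
    (φ : ℝ → ℝ) (hφc : Continuous φ) (hφmono : StrictMono φ)
    (hφbdd : ∃ C : ℝ, ∀ t : ℝ, |φ t| ≤ C) (hφ0 : φ 0 ≤ 0)
    (g : ℝ → ℝ) (hgc : ContinuousOn g (Set.Icc 0 B))
    (hg : ∀ x ∈ Set.Icc (0:ℝ) B, g x ∈ Set.Icc 0 (φ γ)) :
    ∃ T T' T'' : ℝ → ℝ,
      (∀ x ∈ Set.Icc (0:ℝ) B, HasDerivWithinAt T (T' x) (Set.Icc 0 B) x) ∧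
      (∀ x ∈ Set.Icc (0:ℝ) B, HasDerivWithinAt T' (T'' x) (Set.Icc 0 B) x) ∧
      ContinuousOn T'' (Set.Icc 0 B) ∧
      (∀ x ∈ Set.Icc (0:ℝ) B, -T'' x + φ (T x) = g x) ∧
      T 0 = Tb ∧ T' B = 0 ∧
      (∀ x ∈ Set.Icc (0:ℝ) B, T x ∈ Set.Icc 0 γ) :=
  stmt_9_general B γ Tb hB hTb φ hφc hφmono hφbdd hφ0 g hgc hg
end

section
/- Let B > 0 and let φ : ℝ → ℝ be continuous and strictly increasing. Let g₁, g₂ ∈ C([0,B]) with g₁(x) ≤ g₂(x) for all x ∈ [0,B], and let T_{b1} ≤ T_{b2} be real numbers. Suppose T₁, T₂ ∈ C²([0,B]) satisfy −T_i''(x) + φ(T_i(x)) = g_i(x) on [0,B] with T_i(0) = T_{bi} and T_i'(B) = 0 for i = 1, 2. Then T₁(x) ≤ T₂(x) for all x ∈ [0,B]. -/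
open Set

/-- Comparison principle for the second order boundary value problem
−T'' + φ(T) = g on [0,B] with Dirichlet condition at 0 and Neumann condition
at B: solutions are monotone in the source term and the boundary datum. -/
theorem stmt_11 (B : ℝ) (hB : 0 < B)
    (φ : ℝ → ℝ) (hφc : Continuous φ) (hφmono : StrictMono φ)
    (g₁ g₂ : ℝ → ℝ) (hg₁c : ContinuousOn g₁ (Set.Icc 0 B))
    (hg₂c : ContinuousOn g₂ (Set.Icc 0 B))
    (hg : ∀ x ∈ Set.Icc (0:ℝ) B, g₁ x ≤ g₂ x)
    (Tb₁ Tb₂ : ℝ) (hTb : Tb₁ ≤ Tb₂)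
    (T₁ T₁' T₁'' T₂ T₂' T₂'' : ℝ → ℝ)
    (hT₁1 : ∀ x ∈ Set.Icc (0:ℝ) B, HasDerivWithinAt T₁ (T₁' x) (Set.Icc 0 B) x)
    (hT₁2 : ∀ x ∈ Set.Icc (0:ℝ) B, HasDerivWithinAt T₁' (T₁'' x) (Set.Icc 0 B) x)
    (hT₁c : ContinuousOn T₁'' (Set.Icc 0 B))
    (hT₂1 : ∀ x ∈ Set.Icc (0:ℝ) B, HasDerivWithinAt T₂ (T₂' x) (Set.Icc 0 B) x)
    (hT₂2 : ∀ x ∈ Set.Icc (0:ℝ) B, HasDerivWithinAt T₂' (T₂'' x) (Set.Icc 0 B) x)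
    (hT₂c : ContinuousOn T₂'' (Set.Icc 0 B))
    (heq₁ : ∀ x ∈ Set.Icc (0:ℝ) B, -T₁'' x + φ (T₁ x) = g₁ x)
    (heq₂ : ∀ x ∈ Set.Icc (0:ℝ) B, -T₂'' x + φ (T₂ x) = g₂ x)
    (hbd₁0 : T₁ 0 = Tb₁) (hbd₁B : T₁' B = 0)
    (hbd₂0 : T₂ 0 = Tb₂) (hbd₂B : T₂' B = 0) :
    ∀ x ∈ Set.Icc (0:ℝ) B, T₁ x ≤ T₂ x := by
  by_contra hcon
  push_neg at hcon
  obtain ⟨c, hc, hwc⟩ := hcon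
  set w : ℝ → ℝ := fun x => T₁ x - T₂ x with hw
  set w' : ℝ → ℝ := fun x => T₁' x - T₂' x with hw'
  set w'' : ℝ → ℝ := fun x => T₁'' x - T₂'' x with hw''
  have hw1 : ∀ x ∈ Set.Icc (0:ℝ) B, HasDerivWithinAt w (w' x) (Set.Icc 0 B) x :=
    fun x hx => (hT₁1 x hx).sub (hT₂1 x hx)
  have hw2 : ∀ x ∈ Set.Icc (0:ℝ) B, HasDerivWithinAt w' (w'' x) (Set.Icc 0 B) x :=
    fun x hx => (hT₁2 x hx).sub (hT₂2 x hx)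
  have hwcont : ContinuousOn w (Set.Icc 0 B) :=
    fun x hx => (hw1 x hx).continuousWithinAt
  have hw'cont : ContinuousOn w' (Set.Icc 0 B) :=
    fun x hx => (hw2 x hx).continuousWithinAt
  -- positivity of w'' where w > 0
  have hkey : ∀ x ∈ Set.Icc (0:ℝ) B, 0 < w x → 0 < w'' x := by
    intro x hx hpos
    have h1 := heq₁ x hx
    have h2 := heq₂ x hx
    have hφ : φ (T₂ x) < φ (T₁ x) := hφmono (by simpa [hw, sub_pos] using hpos)
    have hgx := hg x hx
    simp only [hw'']
    nlinarith
  -- maximum point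
  obtain ⟨x₀, hx₀mem, hmax⟩ := isCompact_Icc.exists_isMaxOn (Set.nonempty_Icc.2 hB.le) hwcont
  have hwx₀ : 0 < w x₀ := lt_of_lt_of_le (by simpa [hw, sub_pos] using hwc) (hmax hc)
  have hw0 : w 0 ≤ 0 := by simp [hw, hbd₁0, hbd₂0, hTb]
  have hx₀pos : 0 < x₀ := by
    rcases lt_or_eq_of_le hx₀mem.1 with h | h
    · exact h
    · exact absurd (h ▸ hwx₀) (not_lt.2 hw0)
  -- derivative zero at the max point
  have hw'x₀ : w' x₀ = 0 := by
    rcases eq_or_lt_of_le hx₀mem.2 with h | h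
    · simp [hw', h, hbd₁B, hbd₂B]
    · have hnhds : Set.Icc (0:ℝ) B ∈ nhds x₀ := Icc_mem_nhds hx₀pos h
      have hd : HasDerivAt w (w' x₀) x₀ := (hw1 x₀ hx₀mem).hasDerivAt hnhds
      have hloc : IsLocalMax w x₀ := hmax.isLocalMax hnhds
      exact hloc.hasDerivAt_eq_zero hd
  -- let a = sup of the set where w ≤ 0 on [0, x₀]
  set S : Set ℝ := Set.Icc 0 x₀ ∩ w ⁻¹' Set.Iic 0 with hS
  have hScl : IsClosed S := by
    have : ContinuousOn w (Set.Icc 0 x₀) :=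
      hwcont.mono (Set.Icc_subset_Icc le_rfl hx₀mem.2)
    exact this.preimage_isClosed_of_isClosed isClosed_Icc isClosed_Iic
  have hSne : S.Nonempty := ⟨0, ⟨le_rfl, hx₀pos.le⟩, hw0⟩
  have hSbdd : BddAbove S := ⟨x₀, fun y hy => hy.1.2⟩
  set a : ℝ := sSup S with ha
  have haS : a ∈ S := hScl.csSup_mem hSne hSbdd
  have ha0 : 0 ≤ a := haS.1.1
  have hax₀ : a < x₀ := lt_of_le_of_ne haS.1.2 (by
    intro h; exact absurd (h ▸ haS.2) (not_le.2 hwx₀))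
  have hsub : Set.Icc a x₀ ⊆ Set.Icc 0 B := Set.Icc_subset_Icc ha0 hx₀mem.2
  -- w > 0 on (a, x₀]
  have hwpos : ∀ x, a < x → x ≤ x₀ → 0 < w x := by
    intro x h1 h2
    by_contra hle
    push_neg at hle
    have : x ∈ S := ⟨⟨ha0.trans h1.le, h2⟩, hle⟩
    exact absurd (le_csSup hSbdd this) (not_le.2 h1)
  -- w' is strictly monotone on [a, x₀]
  have hmono : StrictMonoOn w' (Set.Icc a x₀) := by
    apply strictMonoOn_of_deriv_pos (convex_Icc a x₀) (hw'cont.mono hsub)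
    intro x hx
    rw [interior_Icc] at hx
    have hxmem : x ∈ Set.Icc (0:ℝ) B := hsub ⟨hx.1.le, hx.2.le⟩
    have hnhds : Set.Icc (0:ℝ) B ∈ nhds x :=
      Icc_mem_nhds (ha0.trans_lt hx.1) (hx.2.trans_le hx₀mem.2)
    have hd : HasDerivAt w' (w'' x) x := (hw2 x hxmem).hasDerivAt hnhds
    rw [hd.deriv]
    exact hkey x hxmem (hwpos x hx.1 hx.2.le)
  -- hence w' < 0 on [a, x₀)
  have hw'neg : ∀ x ∈ Set.Ioo a x₀, w' x < 0 := by
    intro x hx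
    have := hmono ⟨hx.1.le, hx.2.le⟩ ⟨hax₀.le, le_rfl⟩ hx.2
    linarith [hw'x₀ ▸ this]
  -- hence w strictly decreasing on [a, x₀]
  have hanti : StrictAntiOn w (Set.Icc a x₀) := by
    apply strictAntiOn_of_deriv_neg (convex_Icc a x₀) (hwcont.mono hsub)
    intro x hx
    rw [interior_Icc] at hx
    have hxmem : x ∈ Set.Icc (0:ℝ) B := hsub ⟨hx.1.le, hx.2.le⟩
    have hnhds : Set.Icc (0:ℝ) B ∈ nhds x :=
      Icc_mem_nhds (ha0.trans_lt hx.1) (hx.2.trans_le hx₀mem.2)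
    have hd : HasDerivAt w (w' x) x := (hw1 x hxmem).hasDerivAt hnhds
    rw [hd.deriv]
    exact hw'neg x hx
  have : w x₀ < w a := hanti ⟨le_rfl, hax₀.le⟩ ⟨hax₀.le, le_rfl⟩ hax₀
  have hwa : w a ≤ 0 := haS.2
  linarith
end

section
/- Let B > 0, γ > 0, let h ∈ C([0,B]) with 0 ≤ h(x) ≤ γ for all x, and let ψ_b : (0,1] → ℝ with 0 ≤ ψ_b(μ) ≤ γ for all μ ∈ (0,1]. Define ψ : [0,B]×([-1,1]\{0}) → ℝ by ψ(x,μ) = ψ_b(μ) e^{-x/μ} + ∫₀ˣ μ⁻¹ e^{-(x-s)/μ} h(s) ds for μ > 0, and ψ(x,μ) = ψ_b(−μ) e^{(2B−x)/μ} − ∫₀^B μ⁻¹ e^{(2B−x−s)/μ} h(s) ds − ∫ₓ^B μ⁻¹ e^{-(x-s)/μ} h(s) ds for μ < 0. Then for every μ ≠ 0, x ↦ ψ(x,μ) is continuously differentiable on [0,B] and μ ∂_x ψ(x,μ) + ψ(x,μ) = h(x) for all x ∈ [0,B]; ψ(0,μ) = ψ_b(μ) and ψ(B,μ) = ψ(B,−μ)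 for all μ ∈ (0,1]; 0 ≤ ψ(x,μ) ≤ γ for all x ∈ [0,B] and μ ≠ 0; and ψ is the unique function with these regularity, equation and boundary properties. -/
/-!
For `μ ≠ 0` each branch of `ψ` is Duhamel's formula
`u x = c e^{-(x-a)/μ} + ∫_a^x μ⁻¹ e^{-(x-s)/μ} h s ds` for `μ u' + u = h`, started at the inflow
end: `a = 0`, `c = ψ_b(μ)` if `μ > 0`, and `a = B`, `c = ψ(B, -μ)` if `μ < 0`, the outflow of the
opposite direction being reflected back. Differentiating gives the equation. Downstream of `a` the
kernel is nonnegative with mass `1 - e^{-(x-a)/μ}`, so `u x` is a weighted average of `c` and values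
of `h` and stays in `[0, γ]`. For uniqueness, the difference `w` of two solutions satisfies
`(e^{x/μ} w)' = 0` and vanishes at the inflow end: first for `μ > 0`, then through the reflection
for `μ < 0`.
-/

open MeasureTheory Set

lemma hasDerivWithinAt_integral_Icc {l r a x : ℝ} {f : ℝ → ℝ} (hf : ContinuousOn f (Icc l r))
    (ha : a ∈ Icc l r) (hx : x ∈ Icc l r) :
    HasDerivWithinAt (fun y => ∫ s in a..y, f s) (f x) (Icc l r) x :=
  have : Fact (x ∈ Icc l r) := ⟨hx⟩
  intervalIntegral.integral_hasDerivWithinAt_right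
    ((hf.mono (uIcc_subset_Icc ha hx)).intervalIntegrable)
    ⟨Icc l r, self_mem_nhdsWithin, hf.aestronglyMeasurable measurableSet_Icc⟩ (hf x hx)

lemma intervalIntegral_mul_mem_Icc {a b γ : ℝ} {k f : ℝ → ℝ} (hab : a ≤ b)
    (hk : ContinuousOn k (Icc a b)) (hk_nonneg : ∀ s ∈ Icc a b, 0 ≤ k s)
    (hf : ContinuousOn f (Icc a b)) (hfγ : ∀ s ∈ Icc a b, f s ∈ Icc 0 γ) :
    ∫ s in a..b, k s * f s ∈ Icc 0 (γ * ∫ s in a..b, k s) := by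
  refine ⟨intervalIntegral.integral_nonneg hab fun s hs =>
    mul_nonneg (hk_nonneg s hs) (hfγ s hs).1, ?_⟩
  rw [← intervalIntegral.integral_const_mul]
  refine intervalIntegral.integral_mono_on hab ((hk.mul hf).intervalIntegrable_of_Icc hab)
    ((hk.const_smul γ).intervalIntegrable_of_Icc hab) fun s hs => ?_
  rw [mul_comm γ]
  exact mul_le_mul_of_nonneg_left (hfγ s hs).2 (hk_nonneg s hs)

lemma eqOn_of_hasDerivWithinAt_of_mul_add_eq {μ l r a : ℝ} {h u v u' v' : ℝ → ℝ} (hμ : μ ≠ 0)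
    (hu : ∀ x ∈ Icc l r, HasDerivWithinAt u (u' x) (Icc l r) x)
    (hu_eq : ∀ x ∈ Icc l r, μ * u' x + u x = h x)
    (hv : ∀ x ∈ Icc l r, HasDerivWithinAt v (v' x) (Icc l r) x)
    (hv_eq : ∀ x ∈ Icc l r, μ * v' x + v x = h x)
    (ha : a ∈ Icc l r) (hua : u a = v a) : EqOn u v (Icc l r) := by
  set g := fun y => Real.exp (y / μ) * (u y - v y) with hg_def
  have hg : ∀ y ∈ Icc l r, HasDerivWithinAt g 0 (Icc l r) y := by
    intro y hy
    have hexp : HasDerivAt (fun y => Real.exp (y / μ)) (Real.exp (y / μ) * (1 / μ)) y := by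
      simpa using ((hasDerivAt_id y).div_const μ).exp
    refine (hexp.hasDerivWithinAt.mul ((hu y hy).sub (hv y hy))).congr_deriv ?_
    simp only [Pi.sub_apply]
    field_simp
    linear_combination Real.exp (y / μ) * (hu_eq y hy - hv_eq y hy)
  have hconst := constant_of_has_deriv_right_zero (fun y hy => (hg y hy).continuousWithinAt)
    fun y hy => (hg y (Ico_subset_Icc_self hy)).mono_of_mem_nhdsWithin (Icc_mem_nhdsGE_of_mem hy)
  intro x hx
  have hgx : g x = 0 := by rw [hconst x hx, ← hconst a ha]; simp [hg_def, hua]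
  simpa [hg_def, sub_eq_zero, Real.exp_ne_zero] using hgx

-- Duhamel's formula for `μ u' + u = h` with initial value `u a = c`.
noncomputable def transportSolution (μ : ℝ) (h : ℝ → ℝ) (a c x : ℝ) : ℝ :=
  c * Real.exp (-(x - a) / μ) + ∫ s in a..x, μ⁻¹ * Real.exp (-(x - s) / μ) * h s

section transportSolution

variable {μ : ℝ} {h : ℝ → ℝ} {a c x : ℝ}

@[simp]
lemma transportSolution_self : transportSolution μ h a c a = c := by
  simp [transportSolution]

lemma transportSolution_eq_exp_mul :
    transportSolution μ h a c x =
      Real.exp (-x / μ) * (c * Real.exp (a / μ) + μ⁻¹ * ∫ s in a..x, Real.exp (s / μ) * h s) := by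
  have hsplit : ∀ y, Real.exp (-(x - y) / μ) = Real.exp (-x / μ) * Real.exp (y / μ) := fun y => by
    rw [← Real.exp_add]; ring_nf
  simp only [transportSolution, hsplit, mul_add, ← intervalIntegral.integral_const_mul]
  congr 1
  · ring
  · exact intervalIntegral.integral_congr fun s _ => by ring

lemma hasDerivWithinAt_transportSolution {l r : ℝ} (hh : ContinuousOn h (Icc l r))
    (ha : a ∈ Icc l r) (hx : x ∈ Icc l r) :
    HasDerivWithinAt (transportSolution μ h a c)
      (μ⁻¹ * (h x - transportSolution μ h a c x)) (Icc l r) x := by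
  have hdecay : HasDerivAt (fun y => Real.exp (-y / μ)) (Real.exp (-x / μ) * (-1 / μ)) x := by
    simpa using ((hasDerivAt_neg x).div_const μ).exp
  have hint := hasDerivWithinAt_integral_Icc (f := fun s => Real.exp (s / μ) * h s)
    (ContinuousOn.mul (by fun_prop) hh) ha hx
  have hinv : Real.exp (-x / μ) * Real.exp (x / μ) = 1 := by
    rw [← Real.exp_add]; ring_nf; exact Real.exp_zero
  have hfun : transportSolution μ h a c = fun y => Real.exp (-y / μ) *
      (c * Real.exp (a / μ) + μ⁻¹ * ∫ s in a..y, Real.exp (s / μ) * h s) :=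
    funext fun _ => transportSolution_eq_exp_mul
  rw [hfun]
  refine (hdecay.hasDerivWithinAt.mul ((hint.const_mul μ⁻¹).const_add _)).congr_deriv ?_
  linear_combination (μ⁻¹ * h x) * hinv

lemma integral_inv_mul_exp_neg_sub_div :
    ∫ s in a..x, μ⁻¹ * Real.exp (-(x - s) / μ) = 1 - Real.exp (-(x - a) / μ) := by
  have hderiv : ∀ s ∈ uIcc a x,
      HasDerivAt (fun s => Real.exp (-(x - s) / μ)) (μ⁻¹ * Real.exp (-(x - s) / μ)) s := by
    intro s _
    have := (((hasDerivAt_id s).sub_const x).div_const μ).exp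
    simp only [id, neg_sub] at this ⊢
    rwa [mul_one_div, ← inv_mul_eq_div] at this
  rw [intervalIntegral.integral_eq_sub_of_hasDerivAt hderiv
    (Continuous.intervalIntegrable (by fun_prop) _ _)]
  simp


lemma transportSolution_mem_Icc {l r γ : ℝ} (hμ : μ ≠ 0) (hh : ContinuousOn h (Icc l r))
    (hhγ : ∀ s ∈ Icc l r, h s ∈ Icc 0 γ) (ha : a ∈ Icc l r) (hx : x ∈ Icc l r)
    (hdownstream : 0 ≤ (x - a) / μ) (hc : c ∈ Icc 0 γ) :
    transportSolution μ h a c x ∈ Icc 0 γ := by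
  have hE1 : Real.exp (-(x - a) / μ) ≤ 1 := Real.exp_le_one_iff.2 (by rw [neg_div]; linarith)
  have hE0 := Real.exp_pos (-(x - a) / μ)
  have hk : Continuous fun s => μ⁻¹ * Real.exp (-(x - s) / μ) := by fun_prop
  have hI : ∫ s in a..x, μ⁻¹ * Real.exp (-(x - s) / μ) * h s ∈
      Icc 0 (γ * (1 - Real.exp (-(x - a) / μ))) := by
    rw [← integral_inv_mul_exp_neg_sub_div]
    rcases hμ.lt_or_gt with hneg | hpos
    · have hxa : x ≤ a := by linarith [(le_div_iff_of_neg hneg).1 hdownstream]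
      have hweight : ∀ s ∈ Icc x a, 0 ≤ -(μ⁻¹ * Real.exp (-(x - s) / μ)) := fun s _ =>
        neg_nonneg.2 (mul_nonpos_of_nonpos_of_nonneg (inv_nonpos.2 hneg.le) (Real.exp_pos _).le)
      have := intervalIntegral_mul_mem_Icc (k := fun s => -(μ⁻¹ * Real.exp (-(x - s) / μ))) hxa
        hk.neg.continuousOn hweight
        (hh.mono (Icc_subset_Icc hx.1 ha.2)) fun s hs => hhγ s ⟨hx.1.trans hs.1, hs.2.trans ha.2⟩
      simpa only [neg_mul, intervalIntegral.integral_neg, ← intervalIntegral.integral_symm]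
        using this
    · have hax : a ≤ x := by linarith [(le_div_iff₀ hpos).1 hdownstream]
      exact intervalIntegral_mul_mem_Icc hax hk.continuousOn (fun s _ => by positivity)
        (hh.mono (Icc_subset_Icc ha.1 hx.2)) fun s hs => hhγ s ⟨ha.1.trans hs.1, hs.2.trans hx.2⟩
  rw [transportSolution]
  constructor <;> nlinarith [hc.1, hc.2, hI.1, hI.2]

lemma transportSolution_transportSolution_neg (b c x : ℝ) :
    transportSolution μ h b (transportSolution (-μ) h 0 c b) x =
      c * Real.exp ((2 * b - x) / μ)
        - (∫ s in (0:ℝ)..b, μ⁻¹ * Real.exp ((2 * b - x - s) / μ) * h s)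
        - (∫ s in x..b, μ⁻¹ * Real.exp (-(x - s) / μ) * h s) := by
  have hkernel : ∀ s, (-μ)⁻¹ * Real.exp (-(b - s) / -μ) * h s * Real.exp (-(x - b) / μ) =
      -(μ⁻¹ * Real.exp ((2 * b - x - s) / μ) * h s) := fun s => by
    rw [show (2 * b - x - s) / μ = -(b - s) / -μ + -(x - b) / μ by ring, Real.exp_add]
    ring
  have hexp : Real.exp (-(b - 0) / -μ) * Real.exp (-(x - b) / μ) = Real.exp ((2 * b - x) / μ) := by
    rw [← Real.exp_add]; ring_nf
  rw [transportSolution, transportSolution, add_mul, ← intervalIntegral.integral_mul_const]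
  simp only [hkernel, intervalIntegral.integral_neg]
  rw [intervalIntegral.integral_symm b x, mul_assoc, hexp]
  ring

lemma hasDerivWithinAt_of_eqOn_transportSolution {u : ℝ → ℝ} {l r : ℝ}
    (hu : EqOn u (transportSolution μ h a c) (Icc l r)) (hh : ContinuousOn h (Icc l r))
    (ha : a ∈ Icc l r) (hx : x ∈ Icc l r) :
    HasDerivWithinAt u (μ⁻¹ * (h x - u x)) (Icc l r) x := by
  rw [hu hx]
  exact (hasDerivWithinAt_transportSolution hh ha hx).congr_of_mem hu hx

end transportSolution

def IsTransportSolution (B : ℝ) (h : ℝ → ℝ) (ψ : ℝ → ℝ → ℝ) : Prop :=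
  ∃ ψ' : ℝ → ℝ → ℝ, ∀ μ ∈ Icc (-1:ℝ) 1, μ ≠ 0 →
    (∀ x ∈ Icc (0:ℝ) B, HasDerivWithinAt (fun y => ψ y μ) (ψ' x μ) (Icc 0 B) x) ∧
    ContinuousOn (fun x => ψ' x μ) (Icc 0 B) ∧
    (∀ x ∈ Icc (0:ℝ) B, μ * ψ' x μ + ψ x μ = h x)

def HasReflectiveBoundary (B : ℝ) (ψb : ℝ → ℝ) (ψ : ℝ → ℝ → ℝ) : Prop :=
  ∀ μ ∈ Ioc (0:ℝ) 1, ψ 0 μ = ψb μ ∧ ψ B μ = ψ B (-μ)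

lemma isTransportSolution_of_hasDerivWithinAt {B : ℝ} {h : ℝ → ℝ} {ψ : ℝ → ℝ → ℝ}
    (hh : ContinuousOn h (Icc 0 B))
    (hψ : ∀ μ ∈ Icc (-1:ℝ) 1, μ ≠ 0 → ∀ x ∈ Icc 0 B,
      HasDerivWithinAt (ψ · μ) (μ⁻¹ * (h x - ψ x μ)) (Icc 0 B) x) :
    IsTransportSolution B h ψ :=
  ⟨fun x μ => μ⁻¹ * (h x - ψ x μ), fun μ hμ hμ0 => ⟨hψ μ hμ hμ0,
    continuousOn_const.mul (hh.sub fun x hx => (hψ μ hμ hμ0 x hx).continuousWithinAt),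
    fun x _ => by field_simp; ring⟩⟩

lemma IsTransportSolution.eq_of_hasReflectiveBoundary {B : ℝ} {h ψb : ℝ → ℝ} {ψ χ : ℝ → ℝ → ℝ}
    (hB : 0 ≤ B) (hψ : IsTransportSolution B h ψ) (hχ : IsTransportSolution B h χ)
    (hψb : HasReflectiveBoundary B ψb ψ) (hχb : HasReflectiveBoundary B ψb χ)
    {x μ : ℝ} (hx : x ∈ Icc 0 B) (hμ : μ ∈ Icc (-1:ℝ) 1) (hμ0 : μ ≠ 0) : χ x μ = ψ x μ := by
  obtain ⟨ψ', hψ'⟩ := hψ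
  obtain ⟨χ', hχ'⟩ := hχ
  have hunique : ∀ ν ∈ Icc (-1:ℝ) 1, ν ≠ 0 → ∀ a ∈ Icc 0 B, χ a ν = ψ a ν →
      EqOn (χ · ν) (ψ · ν) (Icc 0 B) := fun ν hν hν0 _ ha hχa =>
    eqOn_of_hasDerivWithinAt_of_mul_add_eq hν0 (hχ' ν hν hν0).1 (hχ' ν hν hν0).2.2
      (hψ' ν hν hν0).1 (hψ' ν hν hν0).2.2 ha hχa
  have hforward : ∀ ν ∈ Ioc (0:ℝ) 1, EqOn (χ · ν) (ψ · ν) (Icc 0 B) := fun ν hν =>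
    hunique ν ⟨by linarith [hν.1], hν.2⟩ hν.1.ne' 0 ⟨le_rfl, hB⟩
      (by rw [(hχb ν hν).1, (hψb ν hν).1])
  rcases hμ0.lt_or_gt with hneg | hpos
  · have hν : -μ ∈ Ioc (0:ℝ) 1 := ⟨neg_pos.2 hneg, by linarith [hμ.1]⟩
    have hχB := (hχb (-μ) hν).2
    have hψB := (hψb (-μ) hν).2
    rw [neg_neg] at hχB hψB
    exact hunique μ hμ hμ0 B ⟨hB, le_rfl⟩
      (hχB.symm.trans ((hforward (-μ) hν ⟨hB, le_rfl⟩).trans hψB)) hx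
  · exact hforward μ ⟨hpos, hμ.2⟩ hx

theorem stmt_12_general (B γ : ℝ) (hB : 0 < B)
    (h : ℝ → ℝ) (hhc : ContinuousOn h (Set.Icc 0 B))
    (hhbd : ∀ x ∈ Set.Icc (0:ℝ) B, h x ∈ Set.Icc 0 γ)
    (ψb : ℝ → ℝ) (hψb : ∀ μ ∈ Set.Ioc (0:ℝ) 1, ψb μ ∈ Set.Icc 0 γ)
    (ψ : ℝ → ℝ → ℝ)
    (hψpos : ∀ μ ∈ Set.Ioc (0:ℝ) 1, ∀ x ∈ Set.Icc (0:ℝ) B,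
      ψ x μ = ψb μ * Real.exp (-x / μ)
        + ∫ s in (0:ℝ)..x, μ⁻¹ * Real.exp (-(x - s) / μ) * h s)
    (hψneg : ∀ μ ∈ Set.Ico (-1:ℝ) 0, ∀ x ∈ Set.Icc (0:ℝ) B,
      ψ x μ = ψb (-μ) * Real.exp ((2*B - x) / μ)
        - (∫ s in (0:ℝ)..B, μ⁻¹ * Real.exp ((2*B - x - s) / μ) * h s)
        - (∫ s in x..B, μ⁻¹ * Real.exp (-(x - s) / μ) * h s)) :
    -- ψ is C¹ in x for each μ ≠ 0 and solves the transport equation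
    (∃ ψ' : ℝ → ℝ → ℝ, ∀ μ ∈ Set.Icc (-1:ℝ) 1, μ ≠ 0 →
      (∀ x ∈ Set.Icc (0:ℝ) B, HasDerivWithinAt (fun y => ψ y μ) (ψ' x μ) (Set.Icc 0 B) x) ∧
      ContinuousOn (fun x => ψ' x μ) (Set.Icc 0 B) ∧
      (∀ x ∈ Set.Icc (0:ℝ) B, μ * ψ' x μ + ψ x μ = h x)) ∧
    -- boundary conditions
    (∀ μ ∈ Set.Ioc (0:ℝ) 1, ψ 0 μ = ψb μ ∧ ψ B μ = ψ B (-μ)) ∧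
    -- bounds
    (∀ x ∈ Set.Icc (0:ℝ) B, ∀ μ ∈ Set.Icc (-1:ℝ) 1, μ ≠ 0 → ψ x μ ∈ Set.Icc 0 γ) ∧
    -- uniqueness
    (∀ χ : ℝ → ℝ → ℝ,
      (∃ χ' : ℝ → ℝ → ℝ, ∀ μ ∈ Set.Icc (-1:ℝ) 1, μ ≠ 0 →
        (∀ x ∈ Set.Icc (0:ℝ) B,
          HasDerivWithinAt (fun y => χ y μ) (χ' x μ) (Set.Icc 0 B) x) ∧
        ContinuousOn (fun x => χ' x μ) (Set.Icc 0 B) ∧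
        (∀ x ∈ Set.Icc (0:ℝ) B, μ * χ' x μ + χ x μ = h x)) →
      (∀ μ ∈ Set.Ioc (0:ℝ) 1, χ 0 μ = ψb μ ∧ χ B μ = χ B (-μ)) →
      ∀ x ∈ Set.Icc (0:ℝ) B, ∀ μ ∈ Set.Icc (-1:ℝ) 1, μ ≠ 0 → χ x μ = ψ x μ) := by
  have h0 : (0:ℝ) ∈ Icc 0 B := ⟨le_rfl, hB.le⟩
  have hB' : B ∈ Icc 0 B := ⟨hB.le, le_rfl⟩
  have hψ_pos : ∀ μ ∈ Ioc (0:ℝ) 1, EqOn (ψ · μ) (transportSolution μ h 0 (ψb μ)) (Icc 0 B) :=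
    fun μ hμ x hx => (hψpos μ hμ x hx).trans (by rw [transportSolution, sub_zero])
  have hψ_neg : ∀ μ ∈ Ico (-1:ℝ) 0, EqOn (ψ · μ)
      (transportSolution μ h B (transportSolution (-μ) h 0 (ψb (-μ)) B)) (Icc 0 B) :=
    fun μ hμ x hx => (hψneg μ hμ x hx).trans (transportSolution_transportSolution_neg ..).symm
  have hbc : HasReflectiveBoundary B ψb ψ := fun μ hμ =>
    ⟨(hψ_pos μ hμ h0).trans transportSolution_self, by
      have hreflect := hψ_neg (-μ) ⟨neg_le_neg hμ.2, neg_neg_of_pos hμ.1⟩ hB'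
      simp only [neg_neg, transportSolution_self] at hreflect
      exact (hψ_pos μ hμ hB').trans hreflect.symm⟩
  have hψ_sol : IsTransportSolution B h ψ := by
    refine isTransportSolution_of_hasDerivWithinAt hhc fun μ hμ hμ0 x hx => ?_
    rcases hμ0.lt_or_gt with hneg | hpos
    · exact hasDerivWithinAt_of_eqOn_transportSolution (hψ_neg μ ⟨hμ.1, hneg⟩) hhc hB' hx
    · exact hasDerivWithinAt_of_eqOn_transportSolution (hψ_pos μ ⟨hpos, hμ.2⟩) hhc h0 hx
  refine ⟨hψ_sol, hbc, fun x hx μ hμ hμ0 => ?_,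
    fun χ hχ hχb x hx μ hμ hμ0 => hψ_sol.eq_of_hasReflectiveBoundary hB.le hχ hbc hχb hx hμ hμ0⟩
  have hforward : ∀ ν ∈ Ioc (0:ℝ) 1, ∀ y ∈ Icc 0 B,
      transportSolution ν h 0 (ψb ν) y ∈ Icc 0 γ := fun ν hν y hy =>
    transportSolution_mem_Icc hν.1.ne' hhc hhbd h0 hy
      (div_nonneg (by linarith [hy.1]) hν.1.le) (hψb ν hν)
  rcases hμ0.lt_or_gt with hneg | hpos
  · rw [show ψ x μ = _ from hψ_neg μ ⟨hμ.1, hneg⟩ hx]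
    exact transportSolution_mem_Icc hμ0 hhc hhbd hB' hx
      (div_nonneg_of_nonpos (by linarith [hx.2]) hneg.le)
      (hforward (-μ) ⟨neg_pos.2 hneg, by linarith [hμ.1]⟩ B hB')
  · rw [show ψ x μ = _ from hψ_pos μ ⟨hpos, hμ.2⟩ hx]
    exact hforward μ ⟨hpos, hμ.2⟩ x hx

/-- The explicit formulas solve the linear transport equation
μ∂ₓψ + ψ = h on [0,B] with inflow data ψ_b at x = 0 and reflective boundary
condition at x = B; bounds and uniqueness. -/
theorem stmt_12 (B γ : ℝ) (hB : 0 < B) (hγ : 0 < γ)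
    (h : ℝ → ℝ) (hhc : ContinuousOn h (Set.Icc 0 B))
    (hhbd : ∀ x ∈ Set.Icc (0:ℝ) B, h x ∈ Set.Icc 0 γ)
    (ψb : ℝ → ℝ) (hψb : ∀ μ ∈ Set.Ioc (0:ℝ) 1, ψb μ ∈ Set.Icc 0 γ)
    (ψ : ℝ → ℝ → ℝ)
    (hψpos : ∀ μ ∈ Set.Ioc (0:ℝ) 1, ∀ x ∈ Set.Icc (0:ℝ) B,
      ψ x μ = ψb μ * Real.exp (-x / μ)
        + ∫ s in (0:ℝ)..x, μ⁻¹ * Real.exp (-(x - s) / μ) * h s)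
    (hψneg : ∀ μ ∈ Set.Ico (-1:ℝ) 0, ∀ x ∈ Set.Icc (0:ℝ) B,
      ψ x μ = ψb (-μ) * Real.exp ((2*B - x) / μ)
        - (∫ s in (0:ℝ)..B, μ⁻¹ * Real.exp ((2*B - x - s) / μ) * h s)
        - (∫ s in x..B, μ⁻¹ * Real.exp (-(x - s) / μ) * h s)) :
    -- ψ is C¹ in x for each μ ≠ 0 and solves the transport equation
    (∃ ψ' : ℝ → ℝ → ℝ, ∀ μ ∈ Set.Icc (-1:ℝ) 1, μ ≠ 0 →
      (∀ x ∈ Set.Icc (0:ℝ) B, HasDerivWithinAt (fun y => ψ y μ) (ψ' x μ) (Set.Icc 0 B) x) ∧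
      ContinuousOn (fun x => ψ' x μ) (Set.Icc 0 B) ∧
      (∀ x ∈ Set.Icc (0:ℝ) B, μ * ψ' x μ + ψ x μ = h x)) ∧
    -- boundary conditions
    (∀ μ ∈ Set.Ioc (0:ℝ) 1, ψ 0 μ = ψb μ ∧ ψ B μ = ψ B (-μ)) ∧
    -- bounds
    (∀ x ∈ Set.Icc (0:ℝ) B, ∀ μ ∈ Set.Icc (-1:ℝ) 1, μ ≠ 0 → ψ x μ ∈ Set.Icc 0 γ) ∧
    -- uniqueness
    (∀ χ : ℝ → ℝ → ℝ,
      (∃ χ' : ℝ → ℝ → ℝ, ∀ μ ∈ Set.Icc (-1:ℝ) 1, μ ≠ 0 →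
        (∀ x ∈ Set.Icc (0:ℝ) B,
          HasDerivWithinAt (fun y => χ y μ) (χ' x μ) (Set.Icc 0 B) x) ∧
        ContinuousOn (fun x => χ' x μ) (Set.Icc 0 B) ∧
        (∀ x ∈ Set.Icc (0:ℝ) B, μ * χ' x μ + χ x μ = h x)) →
      (∀ μ ∈ Set.Ioc (0:ℝ) 1, χ 0 μ = ψb μ ∧ χ B μ = χ B (-μ)) →
      ∀ x ∈ Set.Icc (0:ℝ) B, ∀ μ ∈ Set.Icc (-1:ℝ) 1, μ ≠ 0 → χ x μ = ψ x μ) :=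
  stmt_12_general B γ hB h hhc hhbd ψb hψb ψ hψpos hψneg
end

section
/- Let B > 0, γ > 0. Let h₁, h₂ ∈ C([0,B]) with 0 ≤ h₁(x) ≤ h₂(x) ≤ γ for all x ∈ [0,B], and let ψ_{b1}, ψ_{b2} : (0,1] → ℝ with 0 ≤ ψ_{b1}(μ) ≤ ψ_{b2}(μ) ≤ γ for all μ ∈ (0,1]. For i = 1, 2 let ψ_i be the solution of μ∂_xψ_i + ψ_i = h_i on [0,B] (C¹ in x for each μ ≠ 0) with ψ_i(0,μ) = ψ_{bi}(μ) and ψ_i(B,μ) = ψ_i(B,−μ) for μ ∈ (0,1]. Then 0 ≤ ψ₁(x,μ) ≤ ψ₂(x,μ) ≤ γ for all x ∈ [0,B] and μ ∈ [-1,1]\{0}. -/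
/-!
For fixed `μ ≠ 0`, a supersolution `μ w' + w ≥ 0` has the integrating factor `exp (x / μ)`:
`(exp (x / μ) w)' = exp (x / μ) / μ · (μ w' + w)` has the sign of `μ`, so `exp (x / μ) w` is
monotone for `μ > 0` and antitone for `μ < 0`. Hence `w ≥ 0` propagates from the inflow boundary
`x = 0` for `μ > 0`, then through the reflection at `x = B` to the directions `μ < 0`, and from
`x = B` back across the slab. The three inequalities follow by applying this to `ψ₁`, `ψ₂ - ψ₁`
and `γ - ψ₂`, which are supersolutions with nonnegative inflow data and reflective boundary
conditions.
-/

open Set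

section IntegratingFactor

variable {a b μ : ℝ} {w w' : ℝ → ℝ}

lemma hasDerivWithinAt_exp_div_mul {s : Set ℝ} {x : ℝ} (hμ : μ ≠ 0)
    (hw : HasDerivWithinAt w (w' x) s x) :
    HasDerivWithinAt (fun y => Real.exp (y / μ) * w y)
      (Real.exp (x / μ) / μ * (μ * w' x + w x)) s x := by
  have hexp : HasDerivAt (fun y => Real.exp (y / μ)) (Real.exp (x / μ) * (1 / μ)) x :=
    ((hasDerivAt_id x).div_const μ).exp
  refine (hexp.hasDerivWithinAt.mul hw).congr_deriv ?_
  field_simp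
  ring

lemma monotoneOn_exp_div_mul (hμ : 0 < μ)
    (hd : ∀ x ∈ Icc a b, HasDerivWithinAt w (w' x) (Icc a b) x)
    (hsuper : ∀ x ∈ Icc a b, 0 ≤ μ * w' x + w x) :
    MonotoneOn (fun y => Real.exp (y / μ) * w y) (Icc a b) := by
  have hF x (hx : x ∈ Icc a b) := hasDerivWithinAt_exp_div_mul hμ.ne' (hd x hx)
  refine monotoneOn_of_hasDerivWithinAt_nonneg (convex_Icc a b)
    (fun x hx => (hF x hx).continuousWithinAt)
    (fun x hx => (hF x (interior_subset hx)).mono interior_subset) fun x hx => ?_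
  exact mul_nonneg (div_nonneg (Real.exp_pos _).le hμ.le) (hsuper x (interior_subset hx))

lemma antitoneOn_exp_div_mul (hμ : μ < 0)
    (hd : ∀ x ∈ Icc a b, HasDerivWithinAt w (w' x) (Icc a b) x)
    (hsuper : ∀ x ∈ Icc a b, 0 ≤ μ * w' x + w x) :
    AntitoneOn (fun y => Real.exp (y / μ) * w y) (Icc a b) := by
  have hF x (hx : x ∈ Icc a b) := hasDerivWithinAt_exp_div_mul hμ.ne (hd x hx)
  refine antitoneOn_of_hasDerivWithinAt_nonpos (convex_Icc a b)
    (fun x hx => (hF x hx).continuousWithinAt)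
    (fun x hx => (hF x (interior_subset hx)).mono interior_subset) fun x hx => ?_
  exact mul_nonpos_of_nonpos_of_nonneg (div_nonpos_of_nonneg_of_nonpos (Real.exp_pos _).le hμ.le)
    (hsuper x (interior_subset hx))

lemma nonneg_of_supersolution_of_pos (hμ : 0 < μ)
    (hd : ∀ x ∈ Icc a b, HasDerivWithinAt w (w' x) (Icc a b) x)
    (hsuper : ∀ x ∈ Icc a b, 0 ≤ μ * w' x + w x) (ha : 0 ≤ w a) :
    ∀ x ∈ Icc a b, 0 ≤ w x := by
  intro x hx
  have hax : Real.exp (a / μ) * w a ≤ Real.exp (x / μ) * w x :=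
    monotoneOn_exp_div_mul hμ hd hsuper (left_mem_Icc.2 (hx.1.trans hx.2)) hx hx.1
  exact (mul_nonneg_iff_of_pos_left (Real.exp_pos _)).1
    ((mul_nonneg (Real.exp_pos _).le ha).trans hax)

lemma nonneg_of_supersolution_of_neg (hμ : μ < 0)
    (hd : ∀ x ∈ Icc a b, HasDerivWithinAt w (w' x) (Icc a b) x)
    (hsuper : ∀ x ∈ Icc a b, 0 ≤ μ * w' x + w x) (hb : 0 ≤ w b) :
    ∀ x ∈ Icc a b, 0 ≤ w x := by
  intro x hx
  have hxb : Real.exp (b / μ) * w b ≤ Real.exp (x / μ) * w x :=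
    antitoneOn_exp_div_mul hμ hd hsuper hx (right_mem_Icc.2 (hx.1.trans hx.2)) hx.2
  exact (mul_nonneg_iff_of_pos_left (Real.exp_pos _)).1
    ((mul_nonneg (Real.exp_pos _).le hb).trans hxb)

end IntegratingFactor

lemma nonneg_of_reflective_supersolution {B : ℝ} {w : ℝ → ℝ → ℝ} (w' : ℝ → ℝ → ℝ)
    (hd : ∀ μ ∈ Icc (-1 : ℝ) 1, μ ≠ 0 →
      ∀ x ∈ Icc (0 : ℝ) B, HasDerivWithinAt (fun y => w y μ) (w' x μ) (Icc 0 B) x)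
    (hsuper : ∀ x ∈ Icc (0 : ℝ) B, ∀ μ ∈ Icc (-1 : ℝ) 1, μ ≠ 0 → 0 ≤ μ * w' x μ + w x μ)
    (hinflow : ∀ μ ∈ Ioc (0 : ℝ) 1, 0 ≤ w 0 μ)
    (hrefl : ∀ μ ∈ Ioc (0 : ℝ) 1, w B μ = w B (-μ)) :
    ∀ x ∈ Icc (0 : ℝ) B, ∀ μ ∈ Icc (-1 : ℝ) 1, μ ≠ 0 → 0 ≤ w x μ := by
  have hpos : ∀ μ ∈ Ioc (0 : ℝ) 1, ∀ x ∈ Icc (0 : ℝ) B, 0 ≤ w x μ := fun μ hμ =>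
    have hμI : μ ∈ Icc (-1 : ℝ) 1 := ⟨by linarith [hμ.1], hμ.2⟩
    nonneg_of_supersolution_of_pos hμ.1 (hd μ hμI hμ.1.ne') (fun x hx => hsuper x hx μ hμI hμ.1.ne')
      (hinflow μ hμ)
  intro x hx μ hμ hμ0
  rcases hμ0.lt_or_gt with hneg | hμpos
  · have hmμ : -μ ∈ Ioc (0 : ℝ) 1 := ⟨by linarith, by linarith [hμ.1]⟩
    have hB : 0 ≤ w B μ := by
      simpa only [hrefl (-μ) hmμ, neg_neg] using hpos (-μ) hmμ B ⟨hx.1.trans hx.2, le_rfl⟩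
    exact nonneg_of_supersolution_of_neg hneg (hd μ hμ hμ0) (fun y hy => hsuper y hy μ hμ hμ0) hB
      x hx
  · exact hpos μ ⟨hμpos, hμ.2⟩ x hx

theorem stmt_13_general (B γ : ℝ)
    (h₁ h₂ : ℝ → ℝ)
    (hh : ∀ x ∈ Set.Icc (0:ℝ) B, 0 ≤ h₁ x ∧ h₁ x ≤ h₂ x ∧ h₂ x ≤ γ)
    (ψb₁ ψb₂ : ℝ → ℝ)
    (hψb : ∀ μ ∈ Set.Ioc (0:ℝ) 1, 0 ≤ ψb₁ μ ∧ ψb₁ μ ≤ ψb₂ μ ∧ ψb₂ μ ≤ γ)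
    (ψ₁ ψ₁' ψ₂ ψ₂' : ℝ → ℝ → ℝ)
    (hψ₁reg : ∀ μ ∈ Set.Icc (-1:ℝ) 1, μ ≠ 0 →
      (∀ x ∈ Set.Icc (0:ℝ) B, HasDerivWithinAt (fun y => ψ₁ y μ) (ψ₁' x μ) (Set.Icc 0 B) x) ∧
      ContinuousOn (fun x => ψ₁' x μ) (Set.Icc 0 B))
    (hψ₂reg : ∀ μ ∈ Set.Icc (-1:ℝ) 1, μ ≠ 0 →
      (∀ x ∈ Set.Icc (0:ℝ) B, HasDerivWithinAt (fun y => ψ₂ y μ) (ψ₂' x μ) (Set.Icc 0 B) x) ∧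
      ContinuousOn (fun x => ψ₂' x μ) (Set.Icc 0 B))
    (heq₁ : ∀ x ∈ Set.Icc (0:ℝ) B, ∀ μ ∈ Set.Icc (-1:ℝ) 1, μ ≠ 0 →
      μ * ψ₁' x μ + ψ₁ x μ = h₁ x)
    (heq₂ : ∀ x ∈ Set.Icc (0:ℝ) B, ∀ μ ∈ Set.Icc (-1:ℝ) 1, μ ≠ 0 →
      μ * ψ₂' x μ + ψ₂ x μ = h₂ x)
    (hbd₁ : ∀ μ ∈ Set.Ioc (0:ℝ) 1, ψ₁ 0 μ = ψb₁ μ ∧ ψ₁ B μ = ψ₁ B (-μ))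
    (hbd₂ : ∀ μ ∈ Set.Ioc (0:ℝ) 1, ψ₂ 0 μ = ψb₂ μ ∧ ψ₂ B μ = ψ₂ B (-μ)) :
    ∀ x ∈ Set.Icc (0:ℝ) B, ∀ μ ∈ Set.Icc (-1:ℝ) 1, μ ≠ 0 →
      0 ≤ ψ₁ x μ ∧ ψ₁ x μ ≤ ψ₂ x μ ∧ ψ₂ x μ ≤ γ := by
  have hd₁ μ hμ hμ0 := (hψ₁reg μ hμ hμ0).1
  have hd₂ μ hμ hμ0 := (hψ₂reg μ hμ hμ0).1
  have lower := nonneg_of_reflective_supersolution ψ₁' hd₁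
    (fun x hx μ hμ hμ0 => heq₁ x hx μ hμ hμ0 ▸ (hh x hx).1)
    (fun μ hμ => (hbd₁ μ hμ).1 ▸ (hψb μ hμ).1) (fun μ hμ => (hbd₁ μ hμ).2)
  have middle := nonneg_of_reflective_supersolution (w := fun x μ => ψ₂ x μ - ψ₁ x μ)
    (fun x μ => ψ₂' x μ - ψ₁' x μ)
    (fun μ hμ hμ0 x hx => (hd₂ μ hμ hμ0 x hx).sub (hd₁ μ hμ hμ0 x hx))
    (fun x hx μ hμ hμ0 => by linarith [heq₁ x hx μ hμ hμ0, heq₂ x hx μ hμ hμ0, (hh x hx).2.1])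
    (fun μ hμ => by linarith [(hbd₁ μ hμ).1, (hbd₂ μ hμ).1, (hψb μ hμ).2.1])
    (fun μ hμ => by simp only [(hbd₁ μ hμ).2, (hbd₂ μ hμ).2])
  have upper := nonneg_of_reflective_supersolution (w := fun x μ => γ - ψ₂ x μ)
    (fun x μ => 0 - ψ₂' x μ)
    (fun μ hμ hμ0 x hx => (hasDerivWithinAt_const x _ γ).sub (hd₂ μ hμ hμ0 x hx))
    (fun x hx μ hμ hμ0 => by linarith [heq₂ x hx μ hμ hμ0, (hh x hx).2.2])
    (fun μ hμ => by linarith [(hbd₂ μ hμ).1, (hψb μ hμ).2.2])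
    (fun μ hμ => by simp only [(hbd₂ μ hμ).2])
  intro x hx μ hμ hμ0
  exact ⟨lower x hx μ hμ hμ0, sub_nonneg.1 (middle x hx μ hμ hμ0),
    sub_nonneg.1 (upper x hx μ hμ hμ0)⟩

/-- Monotonicity of solutions of the linear transport equation
μ∂ₓψ + ψ = h on [0,B] with inflow data at x = 0 and reflective boundary
condition at x = B, with respect to the source term and the inflow datum. -/
theorem stmt_13 (B γ : ℝ) (hB : 0 < B) (hγ : 0 < γ)
    (h₁ h₂ : ℝ → ℝ)
    (hh₁c : ContinuousOn h₁ (Set.Icc 0 B)) (hh₂c : ContinuousOn h₂ (Set.Icc 0 B))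
    (hh : ∀ x ∈ Set.Icc (0:ℝ) B, 0 ≤ h₁ x ∧ h₁ x ≤ h₂ x ∧ h₂ x ≤ γ)
    (ψb₁ ψb₂ : ℝ → ℝ)
    (hψb : ∀ μ ∈ Set.Ioc (0:ℝ) 1, 0 ≤ ψb₁ μ ∧ ψb₁ μ ≤ ψb₂ μ ∧ ψb₂ μ ≤ γ)
    (ψ₁ ψ₁' ψ₂ ψ₂' : ℝ → ℝ → ℝ)
    (hψ₁reg : ∀ μ ∈ Set.Icc (-1:ℝ) 1, μ ≠ 0 →
      (∀ x ∈ Set.Icc (0:ℝ) B, HasDerivWithinAt (fun y => ψ₁ y μ) (ψ₁' x μ) (Set.Icc 0 B) x) ∧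
      ContinuousOn (fun x => ψ₁' x μ) (Set.Icc 0 B))
    (hψ₂reg : ∀ μ ∈ Set.Icc (-1:ℝ) 1, μ ≠ 0 →
      (∀ x ∈ Set.Icc (0:ℝ) B, HasDerivWithinAt (fun y => ψ₂ y μ) (ψ₂' x μ) (Set.Icc 0 B) x) ∧
      ContinuousOn (fun x => ψ₂' x μ) (Set.Icc 0 B))
    (heq₁ : ∀ x ∈ Set.Icc (0:ℝ) B, ∀ μ ∈ Set.Icc (-1:ℝ) 1, μ ≠ 0 →
      μ * ψ₁' x μ + ψ₁ x μ = h₁ x)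
    (heq₂ : ∀ x ∈ Set.Icc (0:ℝ) B, ∀ μ ∈ Set.Icc (-1:ℝ) 1, μ ≠ 0 →
      μ * ψ₂' x μ + ψ₂ x μ = h₂ x)
    (hbd₁ : ∀ μ ∈ Set.Ioc (0:ℝ) 1, ψ₁ 0 μ = ψb₁ μ ∧ ψ₁ B μ = ψ₁ B (-μ))
    (hbd₂ : ∀ μ ∈ Set.Ioc (0:ℝ) 1, ψ₂ 0 μ = ψb₂ μ ∧ ψ₂ B μ = ψ₂ B (-μ)) :
    ∀ x ∈ Set.Icc (0:ℝ) B, ∀ μ ∈ Set.Icc (-1:ℝ) 1, μ ≠ 0 →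
      0 ≤ ψ₁ x μ ∧ ψ₁ x μ ≤ ψ₂ x μ ∧ ψ₂ x μ ≤ γ :=
  stmt_13_general B γ h₁ h₂ hh ψb₁ ψb₂ hψb ψ₁ ψ₁' ψ₂ ψ₂' hψ₁reg hψ₂reg heq₁ heq₂ hbd₁ hbd₂
end

section
/- Let α ∈ (0,1), T_b ≥ 0, M ≥ 0, T_∞ ≥ 0 with T_∞ ≤ T_b + M. Let T : [0,∞) → ℝ be continuous with T(0) = T_b, 0 ≤ T(x) ≤ T_b + 2M, and |T(x) − T_∞| ≤ M e^{-αx} for all x ≥ 0. Let ψ_b : (0,1] → ℝ be measurable. Define ψ(x,μ) := ψ_b(μ) e^{-x/μ} + ∫₀ˣ μ⁻¹ e^{-(x-s)/μ} T(s)⁴ ds for μ ∈ (0,1], and ψ(x,μ) := −∫ₓ^∞ μ⁻¹ e^{-(x-s)/μ} T(s)⁴ ds for μ ∈ [-1,0). Then for every x ≥ 0: |ψ(x,μ) − T_∞⁴| ≤ |ψ_b(μ) − T_b⁴| e^{-x/μ} + 4 (T_b + 2M)³ M e^{-αx} / (1 − μα) for every μ ∈ (0,1], and |ψ(x,μ)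 − T_∞⁴| ≤ 4 (T_b + 2M)³ M e^{-αx} / (1 − μα) for every μ ∈ [-1,0). -/
open MeasureTheory Set Real

/-! For either sign of `μ`, `ψ - T∞⁴` is (up to the inflow term) the average of `T⁴ - T∞⁴` against
the nonnegative kernel `|μ|⁻¹ e^{-|x - s|/|μ|}`, of mass `1 - e^{-x/μ}` for `μ > 0` and `1` for
`μ < 0`. As `a ↦ a⁴` is `4C³`-Lipschitz on `[0, C]`, `|T⁴ - T∞⁴| ≤ 4C³M e^{-αs}`, and the kernel
integrates `e^{-αs}` in closed form to `(e^{-αx} - e^{-x/μ})/(1 - μα)`, resp. `e^{-αx}/(1 - μα)`.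
For `μ > 0` the inflow term `(ψ_b - T_b⁴) e^{-x/μ} + (T_b⁴ - T∞⁴) e^{-x/μ}` is absorbed using
`|T_b⁴ - T∞⁴| ≤ 4C³M` and `1 ≤ 1/(1 - μα)`. -/

theorem abs_pow_sub_pow_le_of_mem_Icc {a b C : ℝ} (ha : a ∈ Icc 0 C) (hb : b ∈ Icc 0 C) (n : ℕ) :
    |a ^ n - b ^ n| ≤ n * C ^ (n - 1) * |a - b| := by
  have hmax : max |a| |b| ≤ C := by
    rw [abs_of_nonneg ha.1, abs_of_nonneg hb.1]
    exact max_le ha.2 hb.2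
  calc |a ^ n - b ^ n| ≤ |a - b| * n * max |a| |b| ^ (n - 1) := abs_pow_sub_pow_le a b n
    _ ≤ |a - b| * n * C ^ (n - 1) := by gcongr
    _ = n * C ^ (n - 1) * |a - b| := by ring

theorem abs_integral_mul_sub_mul_le {X : Type*} [MeasurableSpace X] {ν : Measure X}
    {k f g : X → ℝ} {c : ℝ} (hk : Integrable k ν) (hkg : Integrable (fun s => k s * g s) ν)
    (hf : AEStronglyMeasurable f ν) (hk0 : ∀ᵐ s ∂ν, 0 ≤ k s)
    (hfg : ∀ᵐ s ∂ν, |f s - c| ≤ g s) :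
    |∫ s, k s * f s ∂ν - c * ∫ s, k s ∂ν| ≤ ∫ s, k s * g s ∂ν := by
  have hdev : Integrable (fun s => k s * (f s - c)) ν := by
    refine hkg.mono' (hk.aestronglyMeasurable.mul (hf.sub aestronglyMeasurable_const)) ?_
    filter_upwards [hk0, hfg] with s hks hfs
    rw [norm_mul, Real.norm_eq_abs, abs_of_nonneg hks]
    exact mul_le_mul_of_nonneg_left hfs hks
  have hkf : Integrable (fun s => k s * f s) ν :=
    (hdev.add (hk.const_mul c)).congr <| .of_forall fun s => by
      simp only [Pi.add_apply]; ring
  calc |∫ s, k s * f s ∂ν - c * ∫ s, k s ∂ν| = |∫ s, k s * (f s - c) ∂ν| := by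
        rw [← integral_const_mul, ← integral_sub hkf (hk.const_mul c)]
        congr 2; ext s; ring
    _ ≤ ∫ s, |k s * (f s - c)| ∂ν := abs_integral_le_integral_abs
    _ ≤ ∫ s, k s * g s ∂ν := by
        refine integral_mono_ae hdev.abs hkg ?_
        filter_upwards [hk0, hfg] with s hks hfs
        rw [abs_mul, abs_of_nonneg hks]
        exact mul_le_mul_of_nonneg_left hfs hks

theorem inv_mul_exp_mul_exp_eq {μ : ℝ} (hμ : μ ≠ 0) (a x s : ℝ) :
    μ⁻¹ * exp (-(x - s) / μ) * exp (-a * s) = μ⁻¹ * exp (-x / μ) * exp ((1 - μ * a) / μ * s) := by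
  rw [mul_assoc, mul_assoc, ← exp_add, ← exp_add]
  congr 2
  field_simp
  ring

theorem exp_div_mul_exp_mul_eq {μ : ℝ} (hμ : μ ≠ 0) (a x : ℝ) :
    exp (-x / μ) * exp ((1 - μ * a) / μ * x) = exp (-a * x) := by
  rw [← exp_add]
  congr 1
  field_simp
  ring

theorem integral_inv_mul_exp_mul_exp {μ a : ℝ} (hμ : μ ≠ 0) (ha : 1 - μ * a ≠ 0) (x : ℝ) :
    ∫ s in (0:ℝ)..x, μ⁻¹ * exp (-(x - s) / μ) * exp (-a * s)
      = (exp (-a * x) - exp (-x / μ)) / (1 - μ * a) := by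
  have hb : (1 - μ * a) / μ ≠ 0 := div_ne_zero ha hμ
  simp_rw [inv_mul_exp_mul_exp_eq hμ, intervalIntegral.integral_const_mul,
    intervalIntegral.integral_comp_mul_left (fun s => exp s) hb, integral_exp, smul_eq_mul,
    mul_zero, exp_zero, ← exp_div_mul_exp_mul_eq hμ a x]
  field_simp

theorem integrableOn_Ioi_inv_mul_exp_mul_exp {μ a : ℝ} (hμ : μ < 0) (ha : 0 < 1 - μ * a)
    (x : ℝ) : IntegrableOn (fun s => μ⁻¹ * exp (-(x - s) / μ) * exp (-a * s)) (Ioi x) := by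
  simp_rw [inv_mul_exp_mul_exp_eq hμ.ne]
  exact (integrableOn_exp_mul_Ioi (div_neg_of_pos_of_neg ha hμ) x).const_mul _

theorem integral_Ioi_inv_mul_exp_mul_exp {μ a : ℝ} (hμ : μ < 0) (ha : 0 < 1 - μ * a) (x : ℝ) :
    ∫ s in Ioi x, μ⁻¹ * exp (-(x - s) / μ) * exp (-a * s) = -(exp (-a * x) / (1 - μ * a)) := by
  simp_rw [inv_mul_exp_mul_exp_eq hμ.ne]
  rw [integral_const_mul, integral_exp_mul_Ioi (div_neg_of_pos_of_neg ha hμ),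
    ← exp_div_mul_exp_mul_eq hμ.ne a x]
  field_simp [hμ.ne]

theorem abs_duhamel_solution_sub_le {f : ℝ → ℝ} {μ a c K x : ℝ} (b : ℝ) (hμ : 0 < μ)
    (ha : 0 ≤ a) (hμa : 0 < 1 - μ * a) (hx : 0 ≤ x)
    (hf : AEStronglyMeasurable f (volume.restrict (Ioc 0 x)))
    (hfc : ∀ s ∈ Icc 0 x, |f s - c| ≤ K * exp (-a * s)) :
    |b * exp (-x / μ) + (∫ s in (0:ℝ)..x, μ⁻¹ * exp (-(x - s) / μ) * f s) - c|
      ≤ |b - f 0| * exp (-x / μ) + K * exp (-a * x) / (1 - μ * a) := by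
  set e := exp (-x / μ)
  have hboundary : |f 0 - c| ≤ K := by
    simpa using hfc 0 ⟨le_rfl, hx⟩
  have hK : 0 ≤ K := (abs_nonneg _).trans hboundary
  have hmass : ∫ s in (0:ℝ)..x, μ⁻¹ * exp (-(x - s) / μ) = 1 - e := by
    simpa using integral_inv_mul_exp_mul_exp (a := 0) hμ.ne' (by simp) x
  have hweighted : ∫ s in (0:ℝ)..x, μ⁻¹ * exp (-(x - s) / μ) * (K * exp (-a * s))
      = K * ((exp (-a * x) - e) / (1 - μ * a)) := by
    rw [← integral_inv_mul_exp_mul_exp hμ.ne' hμa.ne', ← intervalIntegral.integral_const_mul]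
    congr 1; ext s; ring
  have hdeviation : |(∫ s in (0:ℝ)..x, μ⁻¹ * exp (-(x - s) / μ) * f s) - c * (1 - e)|
      ≤ K * ((exp (-a * x) - e) / (1 - μ * a)) := by
    rw [← hmass, ← hweighted]
    simp only [intervalIntegral.integral_of_le hx]
    refine abs_integral_mul_sub_mul_le ?_ ?_ hf ?_ ?_
    · exact Continuous.integrableOn_Ioc (by fun_prop)
    · exact Continuous.integrableOn_Ioc (by fun_prop)
    · exact ae_of_all _ fun s => by positivity
    · filter_upwards [ae_restrict_mem measurableSet_Ioc] with s hs
      exact hfc s (Ioc_subset_Icc_self hs)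
  have he : 0 < e := exp_pos _
  have hKe : K * e ≤ K * e / (1 - μ * a) :=
    le_div_self (by positivity) hμa (by nlinarith)
  calc |b * e + (∫ s in (0:ℝ)..x, μ⁻¹ * exp (-(x - s) / μ) * f s) - c|
      = |(b - f 0) * e + (f 0 - c) * e
          + ((∫ s in (0:ℝ)..x, μ⁻¹ * exp (-(x - s) / μ) * f s) - c * (1 - e))| := by
        congr 1; ring
    _ ≤ |b - f 0| * e + K * e + K * ((exp (-a * x) - e) / (1 - μ * a)) := by
        refine (abs_add_three _ _ _).trans ?_
        simp only [abs_mul, abs_of_pos he]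
        gcongr
    _ ≤ |b - f 0| * e + K * exp (-a * x) / (1 - μ * a) := by
        have : K * exp (-a * x) / (1 - μ * a)
            = K * e / (1 - μ * a) + K * ((exp (-a * x) - e) / (1 - μ * a)) := by ring
        linarith

theorem abs_bounded_solution_sub_le {f : ℝ → ℝ} {μ a c K x : ℝ} (hμ : μ < 0)
    (hμa : 0 < 1 - μ * a) (hf : AEStronglyMeasurable f (volume.restrict (Ioi x)))
    (hfc : ∀ s ∈ Ioi x, |f s - c| ≤ K * exp (-a * s)) :
    |(-∫ s in Ioi x, μ⁻¹ * exp (-(x - s) / μ) * f s) - c| ≤ K * exp (-a * x) / (1 - μ * a) := by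
  have hmass : ∫ s in Ioi x, -(μ⁻¹ * exp (-(x - s) / μ)) = 1 := by
    rw [integral_neg, neg_eq_iff_eq_neg]
    simpa using integral_Ioi_inv_mul_exp_mul_exp (a := 0) hμ (by simp) x
  have hweighted : ∫ s in Ioi x, -(μ⁻¹ * exp (-(x - s) / μ)) * (K * exp (-a * s))
      = K * exp (-a * x) / (1 - μ * a) := by
    calc _ = ∫ s in Ioi x, -K * (μ⁻¹ * exp (-(x - s) / μ) * exp (-a * s)) := by
          congr 1; ext s; ring
      _ = _ := by
          rw [integral_const_mul, integral_Ioi_inv_mul_exp_mul_exp hμ hμa]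
          ring
  have hkernel : IntegrableOn (fun s => μ⁻¹ * exp (-(x - s) / μ)) (Ioi x) := by
    simpa using integrableOn_Ioi_inv_mul_exp_mul_exp (a := 0) hμ (by simp) x
  have hweighted_int : IntegrableOn
      (fun s => -(μ⁻¹ * exp (-(x - s) / μ)) * (K * exp (-a * s))) (Ioi x) :=
    ((integrableOn_Ioi_inv_mul_exp_mul_exp hμ hμa x).const_mul (-K)).congr
      (.of_forall fun s => by ring)
  have hkernel_nonneg : ∀ s, 0 ≤ -(μ⁻¹ * exp (-(x - s) / μ)) := fun s =>
    neg_nonneg.2 (mul_nonpos_of_nonpos_of_nonneg (inv_nonpos.2 hμ.le) (exp_pos _).le)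
  have h := abs_integral_mul_sub_mul_le (k := fun s => -(μ⁻¹ * exp (-(x - s) / μ)))
    (c := c) hkernel.neg hweighted_int hf
    (ae_of_all _ hkernel_nonneg) ((ae_restrict_mem measurableSet_Ioi).mono hfc)
  rw [hmass, mul_one, hweighted] at h
  convert h using 3
  rw [← integral_neg]
  congr 1; ext s; ring

theorem stmt_16_general (α Tb M Tinf : ℝ) (hα : α ∈ Set.Ioo (0:ℝ) 1)
    (hM : 0 ≤ M) (hTinf : 0 ≤ Tinf) (hTinfle : Tinf ≤ Tb + M)
    (T : ℝ → ℝ) (hTc : ContinuousOn T (Set.Ici 0)) (hT0 : T 0 = Tb)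
    (hTbd : ∀ x ∈ Set.Ici (0:ℝ), T x ∈ Set.Icc 0 (Tb + 2*M))
    (hTdec : ∀ x ∈ Set.Ici (0:ℝ), |T x - Tinf| ≤ M * Real.exp (-α * x))
    (ψb : ℝ → ℝ)
    (ψ : ℝ → ℝ → ℝ)
    (hψpos : ∀ μ ∈ Set.Ioc (0:ℝ) 1, ∀ x ∈ Set.Ici (0:ℝ),
      ψ x μ = ψb μ * Real.exp (-x / μ)
        + ∫ s in (0:ℝ)..x, μ⁻¹ * Real.exp (-(x - s) / μ) * T s ^ 4)
    (hψneg : ∀ μ ∈ Set.Ico (-1:ℝ) 0, ∀ x ∈ Set.Ici (0:ℝ),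
      ψ x μ = -∫ s in Set.Ioi x, μ⁻¹ * Real.exp (-(x - s) / μ) * T s ^ 4) :
    ∀ x ∈ Set.Ici (0:ℝ),
      (∀ μ ∈ Set.Ioc (0:ℝ) 1,
        |ψ x μ - Tinf ^ 4| ≤ |ψb μ - Tb ^ 4| * Real.exp (-x / μ)
          + 4 * (Tb + 2*M) ^ 3 * M * Real.exp (-α * x) / (1 - μ * α)) ∧
      (∀ μ ∈ Set.Ico (-1:ℝ) 0,
        |ψ x μ - Tinf ^ 4| ≤ 4 * (Tb + 2*M) ^ 3 * M * Real.exp (-α * x) / (1 - μ * α)) := by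
  obtain ⟨hα0, hα1⟩ := hα
  have hTinf_mem : Tinf ∈ Icc 0 (Tb + 2 * M) := ⟨hTinf, by linarith⟩
  have hT4 : ∀ s ∈ Ici (0:ℝ), |T s ^ 4 - Tinf ^ 4| ≤ 4 * (Tb + 2*M) ^ 3 * M * exp (-α * s) :=
    fun s hs => calc
      |T s ^ 4 - Tinf ^ 4| ≤ 4 * (Tb + 2 * M) ^ 3 * |T s - Tinf| := by
        simpa using abs_pow_sub_pow_le_of_mem_Icc (hTbd s hs) hTinf_mem 4
      _ ≤ 4 * (Tb + 2 * M) ^ 3 * (M * exp (-α * s)) := by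
        have hC : 0 ≤ Tb + 2 * M := (hTbd s hs).1.trans (hTbd s hs).2
        gcongr
        exact hTdec s hs
      _ = _ := by ring
  intro x hx
  refine ⟨fun μ hμ => ?_, fun μ hμ => ?_⟩
  · rw [hψpos μ hμ x hx]
    simpa only [hT0] using abs_duhamel_solution_sub_le (f := fun s => T s ^ 4) (ψb μ) hμ.1
      hα0.le (by nlinarith [hμ.2]) hx
      (((hTc.mono (Ioc_subset_Icc_self.trans Icc_subset_Ici_self)).pow 4).aestronglyMeasurable
        measurableSet_Ioc)
      fun s hs => hT4 s hs.1
  · rw [hψneg μ hμ x hx]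
    exact abs_bounded_solution_sub_le (f := fun s => T s ^ 4) hμ.2
      (by nlinarith [mul_neg_of_neg_of_pos hμ.2 hα0])
      (((hTc.mono (Ioi_subset_Ici hx)).pow 4).aestronglyMeasurable measurableSet_Ioi)
      fun s hs => hT4 s (Ioi_subset_Ici hx hs)

/-- Exponential decay of the radiative intensity given exponential decay of
the temperature profile. -/
theorem stmt_16 (α Tb M Tinf : ℝ) (hα : α ∈ Set.Ioo (0:ℝ) 1)
    (hTb : 0 ≤ Tb) (hM : 0 ≤ M) (hTinf : 0 ≤ Tinf) (hTinfle : Tinf ≤ Tb + M)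
    (T : ℝ → ℝ) (hTc : ContinuousOn T (Set.Ici 0)) (hT0 : T 0 = Tb)
    (hTbd : ∀ x ∈ Set.Ici (0:ℝ), T x ∈ Set.Icc 0 (Tb + 2*M))
    (hTdec : ∀ x ∈ Set.Ici (0:ℝ), |T x - Tinf| ≤ M * Real.exp (-α * x))
    (ψb : ℝ → ℝ) (hψbmeas : Measurable ψb)
    (ψ : ℝ → ℝ → ℝ)
    (hψpos : ∀ μ ∈ Set.Ioc (0:ℝ) 1, ∀ x ∈ Set.Ici (0:ℝ),
      ψ x μ = ψb μ * Real.exp (-x / μ)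
        + ∫ s in (0:ℝ)..x, μ⁻¹ * Real.exp (-(x - s) / μ) * T s ^ 4)
    (hψneg : ∀ μ ∈ Set.Ico (-1:ℝ) 0, ∀ x ∈ Set.Ici (0:ℝ),
      ψ x μ = -∫ s in Set.Ioi x, μ⁻¹ * Real.exp (-(x - s) / μ) * T s ^ 4) :
    ∀ x ∈ Set.Ici (0:ℝ),
      (∀ μ ∈ Set.Ioc (0:ℝ) 1,
        |ψ x μ - Tinf ^ 4| ≤ |ψb μ - Tb ^ 4| * Real.exp (-x / μ)
          + 4 * (Tb + 2*M) ^ 3 * M * Real.exp (-α * x) / (1 - μ * α)) ∧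
      (∀ μ ∈ Set.Ico (-1:ℝ) 0,
        |ψ x μ - Tinf ^ 4| ≤ 4 * (Tb + 2*M) ^ 3 * M * Real.exp (-α * x) / (1 - μ * α)) :=
  stmt_16_general α Tb M Tinf hα hM hTinf hTinfle T hTc hT0 hTbd hTdec ψb ψ hψpos hψneg
end
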